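/- arXiv:2512.04422 — 5 statements merged into one kernel-verified Lean document; each statement's English description precedes it below -/
import Mathlib

section
/- Fix z₀ ∈ ℂ and define F : ℂ → ℝ by F(z) = |1 + 2z₀z|². Fix y ∈ ℂ with 1 + 2z₀y ≠ 0 and X ∈ ℂ ≅ ℝ², and for t > 0 set K₁(t, x) = (1/(4πt))·exp(−F(y)·‖x − y‖²/(4t)) and R₁(t, x) = (1 − F(y)/F(x))·∂_t K₁(t, x). Then lim_{t → 0⁺} t^{3/2}·R₁(t, y + √t·X) = (⟪X, ∇F(y)⟫/F(y))·(F(y)·‖X‖²/4 − 1)·(1/(4π))·exp(−F(y)·‖X‖²/4), where ∇F(y) denotes the gradient of F at y. -/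
open Filter Topology RealInnerProductSpace

theorem stmt7 (z₀ : ℂ) (y : ℂ) (hy : 1 + 2 * z₀ * y ≠ 0) (X : ℂ) :
    let F : ℂ → ℝ := fun z => ‖1 + 2 * z₀ * z‖ ^ 2
    let K₁ : ℝ → ℂ → ℝ := fun t x =>
      (1 / (4 * Real.pi * t)) * Real.exp (-(F y * ‖x - y‖ ^ 2) / (4 * t))
    let R₁ : ℝ → ℂ → ℝ := fun t x => (1 - F y / F x) * deriv (fun s => K₁ s x) t
    Tendsto (fun t : ℝ => t ^ ((3 : ℝ) / 2) * R₁ t (y + Real.sqrt t • X))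
      (𝓝[>] 0)
      (𝓝 ((⟪X, gradient F y⟫ / F y) * (F y * ‖X‖ ^ 2 / 4 - 1) * (1 / (4 * Real.pi)) *
        Real.exp (-(F y * ‖X‖ ^ 2) / 4))) := by
  intro F K₁ R₁
  have hπ : Real.pi ≠ 0 := Real.pi_ne_zero
  have hFy : F y ≠ 0 := pow_ne_zero 2 (norm_ne_zero_iff.mpr hy)
  have hFnorm : ∀ z : ℂ, F z = ‖(1:ℂ) + 2 * z₀ * z‖ ^ 2 := fun z => by
    simp [F]
  have hFeq : F = fun z : ℂ => ‖(1:ℂ) + 2 * z₀ * z‖ ^ 2 := funext hFnorm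
  -- differentiability of F
  have hFdiff : DifferentiableAt ℝ F y := by
    rw [hFeq]
    have hg : ContDiff ℝ 1 (fun z : ℂ => (1:ℂ) + 2 * z₀ * z) := by fun_prop
    exact ((hg.norm_sq ℂ).differentiable one_ne_zero) y
  have hFcont : Continuous F := by
    rw [hFeq]; fun_prop
  set D : ℝ := fderiv ℝ F y X with hD
  have hinner : ⟪X, gradient F y⟫ = D := by
    rw [real_inner_comm]
    exact InnerProductSpace.toDual_symm_apply
  -- derivative along the line
  have hline : HasDerivAt (fun s : ℝ => y + s • X) X 0 := by
    simpa using ((hasDerivAt_id (0:ℝ)).smul_const X).const_add y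
  have hφ : HasDerivAt (fun s : ℝ => F (y + s • X)) D 0 := by
    have h0 : HasFDerivAt F (fderiv ℝ F y) ((fun s : ℝ => y + s • X) 0) := by
      simpa using hFdiff.hasFDerivAt
    exact h0.comp_hasDerivAt 0 hline
  have hslope : Tendsto (fun s : ℝ => (F (y + s • X) - F y) / s) (𝓝[≠] 0) (𝓝 D) := by
    have h := hasDerivAt_iff_tendsto_slope.mp hφ
    refine h.congr fun s => ?_
    simp [slope, div_eq_inv_mul]
  -- sqrt tendsto
  have hsqrt : Tendsto Real.sqrt (𝓝[>] (0:ℝ)) (𝓝[>] (0:ℝ)) := by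
    refine tendsto_nhdsWithin_iff.mpr ⟨?_, ?_⟩
    · exact (Real.continuous_sqrt.tendsto' 0 0 Real.sqrt_zero).mono_left nhdsWithin_le_nhds
    · exact eventually_mem_nhdsWithin.mono fun t ht => Real.sqrt_pos.mpr ht
  have h1 : Tendsto (fun t : ℝ => (F (y + Real.sqrt t • X) - F y) / Real.sqrt t)
      (𝓝[>] (0:ℝ)) (𝓝 D) :=
    (hslope.mono_left (nhdsWithin_mono _ fun s hs => ne_of_gt hs)).comp hsqrt
  have hcont : Tendsto (fun t : ℝ => F (y + Real.sqrt t • X)) (𝓝[>] (0:ℝ)) (𝓝 (F y)) := by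
    have hc : Continuous (fun t : ℝ => F (y + Real.sqrt t • X)) :=
      hFcont.comp (continuous_const.add (Real.continuous_sqrt.smul continuous_const))
    have := (hc.tendsto' 0 (F y) (by simp)).mono_left (nhdsWithin_le_nhds (s := Set.Ioi (0:ℝ)))
    exact this
  have h2 : Tendsto (fun t : ℝ => (F (y + Real.sqrt t • X))⁻¹) (𝓝[>] (0:ℝ)) (𝓝 (F y)⁻¹) :=
    hcont.inv₀ hFy
  -- the model function g
  have hg : Tendsto (fun t : ℝ => ((F (y + Real.sqrt t • X) - F y) / Real.sqrt t) *
        (F (y + Real.sqrt t • X))⁻¹ *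
        ((F y * ‖X‖ ^ 2 / 4 - 1) * (1 / (4 * Real.pi)) * Real.exp (-(F y * ‖X‖ ^ 2) / 4)))
      (𝓝[>] (0:ℝ))
      (𝓝 ((⟪X, gradient F y⟫ / F y) * (F y * ‖X‖ ^ 2 / 4 - 1) * (1 / (4 * Real.pi)) *
        Real.exp (-(F y * ‖X‖ ^ 2) / 4))) := by
    have := (h1.mul h2).mul_const
      ((F y * ‖X‖ ^ 2 / 4 - 1) * (1 / (4 * Real.pi)) * Real.exp (-(F y * ‖X‖ ^ 2) / 4))
    convert this using 2
    rw [hinner]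
    ring
  -- eventual equality
  refine hg.congr' ?_
  have hev : ∀ᶠ t in 𝓝[>] (0:ℝ), F (y + Real.sqrt t • X) ≠ 0 := hcont.eventually_ne hFy
  filter_upwards [eventually_mem_nhdsWithin, hev] with t ht hFx
  have ht : (0:ℝ) < t := ht
  have hst : Real.sqrt t ≠ 0 := (Real.sqrt_pos.mpr ht).ne'
  have hsq : Real.sqrt t * Real.sqrt t = t := Real.mul_self_sqrt ht.le
  set x : ℂ := y + Real.sqrt t • X with hx
  set c : ℝ := F y * ‖x - y‖ ^ 2 with hc
  -- compute the derivative
  have hinv : HasDerivAt (fun s : ℝ => s⁻¹) (-(t^2)⁻¹) t := hasDerivAt_inv ht.ne'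
  have ha : HasDerivAt (fun s : ℝ => 1 / (4 * Real.pi) * s⁻¹) (1 / (4 * Real.pi) * -(t^2)⁻¹) t :=
    hinv.const_mul _
  have hb : HasDerivAt (fun s : ℝ => Real.exp (-c / 4 * s⁻¹))
      (Real.exp (-c / 4 * t⁻¹) * (-c / 4 * -(t^2)⁻¹)) t := (hinv.const_mul (-c/4)).exp
  have hK : HasDerivAt (fun s => K₁ s x)
      (1 / (4 * Real.pi) * -(t^2)⁻¹ * Real.exp (-c / 4 * t⁻¹) +
        1 / (4 * Real.pi) * t⁻¹ * (Real.exp (-c / 4 * t⁻¹) * (-c / 4 * -(t^2)⁻¹))) t := by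
    refine (ha.mul hb).congr_of_eventuallyEq (Eventually.of_forall fun s => ?_)
    show (1 / (4 * Real.pi * s)) * Real.exp (-(c) / (4 * s)) = _
    rw [show -c / (4 * s) = -c / 4 * s⁻¹ by ring, show (1:ℝ) / (4 * Real.pi * s) = 1 / (4 * Real.pi) * s⁻¹ by ring]
    rfl
  have hderiv := hK.deriv
  -- norms
  have hxy : x - y = Real.sqrt t • X := by rw [hx]; ring
  have hcval : c = F y * (t * ‖X‖ ^ 2) := by
    rw [hc, hxy, norm_smul, Real.norm_eq_abs, abs_of_nonneg (Real.sqrt_nonneg t), mul_pow,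
      Real.sq_sqrt ht.le]
  have hexp : -c / 4 * t⁻¹ = -(F y * ‖X‖ ^ 2) / 4 := by
    rw [hcval]; field_simp
  have hrpow : t ^ ((3:ℝ)/2) = t * Real.sqrt t := by
    rw [show ((3:ℝ)/2) = 1 + 1/2 by norm_num, Real.rpow_add ht, Real.rpow_one,
      ← Real.sqrt_eq_rpow]
  -- final algebra
  have hR : R₁ t x = (1 - F y / F x) * deriv (fun s => K₁ s x) t := rfl
  rw [hR, hderiv, hexp, hrpow, hcval]
  field_simp
  ring_nf
  rw [Real.sq_sqrt ht.le]
end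

section
/- Let c > 0, let σ ∈ (0, 1), and let V, X ∈ ℝ². Then ∫_{ℝ²} ⟪Z, V⟫·(c‖Z‖² − 1)·exp(−(c/(1−σ))·‖Z − √σ·X‖²) dZ = (π·√σ·(1−σ)/c)·⟪X, V⟫·(c·σ·‖X‖² + 1 − 2σ). -/
open MeasureTheory Real Filter RealInnerProductSpace

lemma tendsto_monGauss (a : ℝ) (ha : 0 < a) (n : ℕ) {l : Filter ℝ}
    (hl : Tendsto (fun x : ℝ => a * x ^ 2) l atTop) :
    Tendsto (fun x : ℝ => x ^ n * Real.exp (-(a * x ^ 2))) l (nhds 0) := by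
  have hA : Tendsto (fun x : ℝ => (a * x ^ 2) ^ n * Real.exp (-(a * x ^ 2)) / a ^ n) l (nhds 0) := by
    have := ((tendsto_pow_mul_exp_neg_atTop_nhds_zero n).comp hl).div_const (a ^ n)
    simpa [Function.comp_def] using this
  have hB : Tendsto (fun x : ℝ => Real.exp (-(a * x ^ 2))) l (nhds 0) := by
    have := Real.tendsto_exp_atBot.comp (tendsto_neg_atBot_iff.mpr hl)
    simpa [Function.comp_def] using this
  have h1 := hA.add hB
  rw [add_zero] at h1
  apply squeeze_zero_norm' _ h1
  filter_upwards [hl.eventually_ge_atTop 1] with x hx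
  rw [Real.norm_eq_abs, abs_mul, abs_of_nonneg (Real.exp_pos _).le, abs_pow]
  have key : |x| ^ n ≤ (a * x ^ 2) ^ n / a ^ n + 1 := by
    have heq : (a * x ^ 2) ^ n / a ^ n = (x ^ 2) ^ n := by
      rw [mul_pow]; field_simp
    rw [heq]
    rcases le_total (|x|) 1 with h | h
    · have h1 : |x| ^ n ≤ 1 := pow_le_one₀ (abs_nonneg x) h
      have hpos : (0:ℝ) ≤ (x ^ 2) ^ n := by positivity
      linarith
    · have h2 : |x| ≤ x ^ 2 := by nlinarith [abs_nonneg x, sq_abs x]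
      have := pow_le_pow_left₀ (abs_nonneg x) h2 n
      linarith
  calc |x| ^ n * Real.exp (-(a * x ^ 2))
      ≤ ((a * x ^ 2) ^ n / a ^ n + 1) * Real.exp (-(a * x ^ 2)) :=
        mul_le_mul_of_nonneg_right key (Real.exp_pos _).le
    _ = (a * x ^ 2) ^ n * Real.exp (-(a * x ^ 2)) / a ^ n + Real.exp (-(a * x ^ 2)) := by ring

lemma tendsto_aSq_atTop (a : ℝ) (ha : 0 < a) :
    Tendsto (fun x : ℝ => a * x ^ 2) atTop atTop ∧
    Tendsto (fun x : ℝ => a * x ^ 2) atBot atTop := by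
  have hT : Tendsto (fun x : ℝ => x ^ 2) atTop atTop := tendsto_pow_atTop two_ne_zero
  have hB : Tendsto (fun x : ℝ => x ^ 2) atBot atTop := by
    have h := hT.comp tendsto_neg_atBot_atTop
    simpa [Function.comp_def] using h
  exact ⟨Tendsto.const_mul_atTop ha hT, Tendsto.const_mul_atTop ha hB⟩

section Moments
variable {a : ℝ}

lemma i0 (ha : 0 < a) : Integrable (fun x : ℝ => Real.exp (-(a * x ^ 2))) := by
  simpa [neg_mul] using integrable_exp_neg_mul_sq ha

lemma i1 (ha : 0 < a) : Integrable (fun x : ℝ => x * Real.exp (-(a * x ^ 2))) := by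
  simpa [neg_mul] using integrable_mul_exp_neg_mul_sq ha

lemma i2 (ha : 0 < a) : Integrable (fun x : ℝ => x ^ 2 * Real.exp (-(a * x ^ 2))) := by
  have := integrable_rpow_mul_exp_neg_mul_sq ha (by norm_num : (-1:ℝ) < 2)
  have h : ∀ x : ℝ, x ^ (2:ℝ) = x ^ (2:ℕ) := fun x => by
    rw [show (2:ℝ) = ((2:ℕ):ℝ) by norm_num, Real.rpow_natCast]
  simpa [neg_mul, h] using this

lemma i3 (ha : 0 < a) : Integrable (fun x : ℝ => x ^ 3 * Real.exp (-(a * x ^ 2))) := by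
  have := integrable_rpow_mul_exp_neg_mul_sq ha (by norm_num : (-1:ℝ) < 3)
  have h : ∀ x : ℝ, x ^ (3:ℝ) = x ^ (3:ℕ) := fun x => by
    rw [show (3:ℝ) = ((3:ℕ):ℝ) by norm_num, Real.rpow_natCast]
  simpa [neg_mul, h] using this

lemma mom0 (ha : 0 < a) : ∫ x : ℝ, Real.exp (-(a * x ^ 2)) = Real.sqrt (π / a) := by
  simpa [neg_mul] using integral_gaussian a

lemma mom1 (ha : 0 < a) : ∫ x : ℝ, x * Real.exp (-(a * x ^ 2)) = 0 := by
  have h := integral_neg_eq_self (fun x : ℝ => x * Real.exp (-(a * x ^ 2))) volume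
  simp only [neg_sq, neg_mul] at h
  rw [integral_neg] at h
  linarith

lemma mom3 (ha : 0 < a) : ∫ x : ℝ, x ^ 3 * Real.exp (-(a * x ^ 2)) = 0 := by
  have h := integral_neg_eq_self (fun x : ℝ => x ^ 3 * Real.exp (-(a * x ^ 2))) volume
  have hcube : ∀ x : ℝ, (-x) ^ 3 = -(x ^ 3) := fun x => by ring
  simp only [neg_sq, hcube, neg_mul] at h
  rw [integral_neg] at h
  linarith

lemma mom2 (ha : 0 < a) :
    ∫ x : ℝ, x ^ 2 * Real.exp (-(a * x ^ 2)) = Real.sqrt (π / a) / (2 * a) := by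
  set f : ℝ → ℝ := fun x => -(1 / (2 * a)) * (x * Real.exp (-(a * x ^ 2))) with hf
  set f' : ℝ → ℝ := fun x => x ^ 2 * Real.exp (-(a * x ^ 2))
      - (1 / (2 * a)) * Real.exp (-(a * x ^ 2)) with hf'
  have hderiv : ∀ x : ℝ, HasDerivAt f (f' x) x := by
    intro x
    have h1 : HasDerivAt (fun x : ℝ => -(a * x ^ 2)) (-(2 * a * x)) x := by
      have := ((hasDerivAt_pow 2 x).const_mul a).neg
      simpa [mul_comm, mul_assoc, mul_left_comm, Pi.neg_def] using this
    have h2 := h1.exp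
    have h3 := (hasDerivAt_id x).mul h2
    have h4 := h3.const_mul (-(1 / (2 * a)))
    convert h4 using 1
    rotate_right
    simp only [hf', id_eq]
    field_simp
    ring
    all_goals rfl
  have hbot : Tendsto f atBot (nhds 0) := by
    have h := (tendsto_monGauss a ha 1 (tendsto_aSq_atTop a ha).2).const_mul (-(1 / (2 * a)))
    rw [mul_zero] at h
    exact h.congr fun x => by simp only [hf, pow_one]
  have htop : Tendsto f atTop (nhds 0) := by
    have h := (tendsto_monGauss a ha 1 (tendsto_aSq_atTop a ha).1).const_mul (-(1 / (2 * a)))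
    rw [mul_zero] at h
    exact h.congr fun x => by simp only [hf, pow_one]
  have hint : Integrable f' := (i2 ha).sub ((i0 ha).const_mul _)
  have h0 := integral_of_hasDerivAt_of_tendsto hderiv hint hbot htop
  rw [sub_zero] at h0
  have h1 : ∫ x, f' x = (∫ x : ℝ, x ^ 2 * Real.exp (-(a * x ^ 2)))
      - (1 / (2 * a)) * ∫ x : ℝ, Real.exp (-(a * x ^ 2)) := by
    rw [hf', integral_sub (i2 ha) ((i0 ha).const_mul _), integral_const_mul]
  rw [h0, mom0 ha] at h1
  have ha' : (2 : ℝ) * a ≠ 0 := by positivity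
  have h5 : (∫ x : ℝ, x ^ 2 * Real.exp (-(a * x ^ 2))) = 1 / (2 * a) * √(π / a) := by linarith
  rw [h5]
  field_simp

lemma integrable_cubicGauss (ha : 0 < a) (k0 k1 k2 k3 : ℝ) :
    Integrable (fun x : ℝ => (k0 + k1 * x + k2 * x ^ 2 + k3 * x ^ 3) * Real.exp (-(a * x ^ 2))) := by
  have hA : Integrable (fun x : ℝ => k0 * Real.exp (-(a * x ^ 2))) := (i0 ha).const_mul k0
  have hB : Integrable (fun x : ℝ => k1 * (x * Real.exp (-(a * x ^ 2)))) := (i1 ha).const_mul k1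
  have hC : Integrable (fun x : ℝ => k2 * (x ^ 2 * Real.exp (-(a * x ^ 2)))) :=
    (i2 ha).const_mul k2
  have hD : Integrable (fun x : ℝ => k3 * (x ^ 3 * Real.exp (-(a * x ^ 2)))) :=
    (i3 ha).const_mul k3
  have h := ((hA.add hB).add hC).add hD
  exact h.congr (Filter.Eventually.of_forall fun x => by simp only [Pi.add_apply]; ring)

lemma gauss_cubic (ha : 0 < a) (k0 k1 k2 k3 : ℝ) :
    ∫ x : ℝ, (k0 + k1 * x + k2 * x ^ 2 + k3 * x ^ 3) * Real.exp (-(a * x ^ 2))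
      = (k0 + k2 / (2 * a)) * Real.sqrt (π / a) := by
  have hA : Integrable (fun x : ℝ => k0 * Real.exp (-(a * x ^ 2))) := (i0 ha).const_mul k0
  have hB : Integrable (fun x : ℝ => k1 * (x * Real.exp (-(a * x ^ 2)))) := (i1 ha).const_mul k1
  have hC : Integrable (fun x : ℝ => k2 * (x ^ 2 * Real.exp (-(a * x ^ 2)))) :=
    (i2 ha).const_mul k2
  have hD : Integrable (fun x : ℝ => k3 * (x ^ 3 * Real.exp (-(a * x ^ 2)))) :=
    (i3 ha).const_mul k3
  have hAB : Integrable (fun x : ℝ => k0 * Real.exp (-(a * x ^ 2))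
      + k1 * (x * Real.exp (-(a * x ^ 2)))) := hA.add hB
  have hABC : Integrable (fun x : ℝ => k0 * Real.exp (-(a * x ^ 2))
      + k1 * (x * Real.exp (-(a * x ^ 2))) + k2 * (x ^ 2 * Real.exp (-(a * x ^ 2)))) := hAB.add hC
  have h : (fun x : ℝ => (k0 + k1 * x + k2 * x ^ 2 + k3 * x ^ 3) * Real.exp (-(a * x ^ 2)))
      = fun x : ℝ => k0 * Real.exp (-(a * x ^ 2)) + k1 * (x * Real.exp (-(a * x ^ 2)))
        + k2 * (x ^ 2 * Real.exp (-(a * x ^ 2))) + k3 * (x ^ 3 * Real.exp (-(a * x ^ 2))) :=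
    funext fun x => by ring
  rw [h, integral_add hABC hD, integral_add hAB hC, integral_add hA hB,
    integral_const_mul, integral_const_mul, integral_const_mul, integral_const_mul,
    mom0 ha, mom1 ha, mom2 ha, mom3 ha]
  ring

lemma cubic_all {a : ℝ} (ha : 0 < a) (f : ℝ → ℝ) (k0 k1 k2 k3 : ℝ)
    (hf : f = fun x => (k0 + k1 * x + k2 * x ^ 2 + k3 * x ^ 3) * Real.exp (-(a * x ^ 2))) :
    Integrable f ∧ ∫ x, f x = (k0 + k2 / (2 * a)) * Real.sqrt (π / a) := by
  rw [hf]; exact ⟨integrable_cubicGauss ha _ _ _ _, gauss_cubic ha _ _ _ _⟩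

noncomputable def ψ (z : ℝ × ℝ) : EuclideanSpace ℝ (Fin 2) :=
  (MeasurableEquiv.toLp 2 (Fin 2 → ℝ)) ((MeasurableEquiv.finTwoArrow).symm z)

lemma ψ_apply0 (z : ℝ × ℝ) : ψ z 0 = z.1 := by
  simp [ψ, MeasurableEquiv.finTwoArrow]

lemma ψ_apply1 (z : ℝ × ℝ) : ψ z 1 = z.2 := by
  simp [ψ, MeasurableEquiv.finTwoArrow]

lemma ψ_mp : MeasurePreserving ψ volume volume :=
  ((EuclideanSpace.volume_preserving_symm_measurableEquiv_toLp (Fin 2)).symm _).comp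
    ((volume_preserving_finTwoArrow ℝ).symm _)

lemma ψ_emb : MeasurableEmbedding ψ :=
  ((MeasurableEquiv.toLp 2 (Fin 2 → ℝ)).measurableEmbedding).comp
    ((MeasurableEquiv.finTwoArrow).symm.measurableEmbedding)

lemma integral_psi (F : EuclideanSpace ℝ (Fin 2) → ℝ) :
    ∫ w, F w = ∫ z : ℝ × ℝ, F (ψ z) := (ψ_mp.integral_comp ψ_emb F).symm

lemma inner2 (x y : EuclideanSpace ℝ (Fin 2)) : ⟪x, y⟫ = x 0 * y 0 + x 1 * y 1 := by
  simp [PiLp.inner_apply, RCLike.inner_apply, Fin.sum_univ_two]; ring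

lemma normsq2 (x : EuclideanSpace ℝ (Fin 2)) : ‖x‖ ^ 2 = x 0 ^ 2 + x 1 ^ 2 := by
  rw [← real_inner_self_eq_norm_sq, inner2]; ring

set_option maxHeartbeats 2000000 in
theorem stmt8 (c σ : ℝ) (hc : 0 < c) (hσ : σ ∈ Set.Ioo (0 : ℝ) 1)
    (V X : EuclideanSpace ℝ (Fin 2)) :
    (∫ Z : EuclideanSpace ℝ (Fin 2),
        ⟪Z, V⟫ * (c * ‖Z‖ ^ 2 - 1) * Real.exp (-(c / (1 - σ)) * ‖Z - Real.sqrt σ • X‖ ^ 2))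
      = (Real.pi * Real.sqrt σ * (1 - σ) / c) * ⟪X, V⟫ * (c * σ * ‖X‖ ^ 2 + 1 - 2 * σ) := by
  obtain ⟨hσ0, hσ1⟩ := hσ
  have h1σ : (0:ℝ) < 1 - σ := by linarith
  set s : ℝ := Real.sqrt σ with hs_def
  have hs2 : s ^ 2 = σ := Real.sq_sqrt hσ0.le
  set a : ℝ := c / (1 - σ) with ha_def
  have ha : 0 < a := div_pos hc h1σ
  rw [← integral_add_right_eq_self (fun Z : EuclideanSpace ℝ (Fin 2) =>
      ⟪Z, V⟫ * (c * ‖Z‖ ^ 2 - 1) * Real.exp (-a * ‖Z - s • X‖ ^ 2)) (s • X)]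
  rw [integral_psi]
  set p : ℝ := s * X 0 with hp
  set q : ℝ := s * X 1 with hq
  set v0 : ℝ := V 0 with hv0
  set v1 : ℝ := V 1 with hv1
  have hpt : ∀ z : ℝ × ℝ,
      ⟪ψ z + s • X, V⟫ * (c * ‖ψ z + s • X‖ ^ 2 - 1)
        * Real.exp (-a * ‖ψ z + s • X - s • X‖ ^ 2)
      = (((z.1+p)*v0*(c*(z.1+p)^2 - 1/2)) * Real.exp (-(a*z.1^2))) * Real.exp (-(a*z.2^2))
        + (((z.1+p)*v0) * Real.exp (-(a*z.1^2))) * ((c*(z.2+q)^2 - 1/2) * Real.exp (-(a*z.2^2)))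
        + ((c*(z.1+p)^2 - 1/2) * Real.exp (-(a*z.1^2))) * (((z.2+q)*v1) * Real.exp (-(a*z.2^2)))
        + (Real.exp (-(a*z.1^2)))
            * (((z.2+q)*v1*(c*(z.2+q)^2 - 1/2)) * Real.exp (-(a*z.2^2))) := by
    intro z
    have hsub : ψ z + s • X - s • X = ψ z := add_sub_cancel_right _ _
    have e0 : (ψ z + s • X) 0 = z.1 + p := by
      simp [ψ_apply0, hp, PiLp.add_apply, PiLp.smul_apply, smul_eq_mul]
    have e1 : (ψ z + s • X) 1 = z.2 + q := by
      simp [ψ_apply1, hq, PiLp.add_apply, PiLp.smul_apply, smul_eq_mul]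
    rw [hsub, inner2, normsq2, normsq2, e0, e1, ψ_apply0, ψ_apply1, ← hv0, ← hv1]
    rw [show -a * (z.1^2 + z.2^2) = -(a*z.1^2) + -(a*z.2^2) by ring, Real.exp_add]
    ring
  simp only [hpt]
  rw [Measure.volume_eq_prod]
  obtain ⟨ig1, vg1⟩ := cubic_all ha
    (fun u : ℝ => ((u+p)*v0*(c*(u+p)^2 - 1/2)) * Real.exp (-(a*u^2)))
    (v0*(c*p^3 - p/2)) (v0*(3*c*p^2 - 1/2)) (3*c*p*v0) (c*v0) (funext fun u => by ring)
  obtain ⟨ig2, vg2⟩ := cubic_all ha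
    (fun u : ℝ => ((u+p)*v0) * Real.exp (-(a*u^2)))
    (p*v0) v0 0 0 (funext fun u => by ring)
  obtain ⟨ig3, vg3⟩ := cubic_all ha
    (fun u : ℝ => (c*(u+p)^2 - 1/2) * Real.exp (-(a*u^2)))
    (c*p^2 - 1/2) (2*c*p) c 0 (funext fun u => by ring)
  obtain ⟨ig4, vg4⟩ := cubic_all ha
    (fun u : ℝ => Real.exp (-(a*u^2)))
    1 0 0 0 (funext fun u => by ring)
  obtain ⟨ih2, vh2⟩ := cubic_all ha
    (fun v : ℝ => (c*(v+q)^2 - 1/2) * Real.exp (-(a*v^2)))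
    (c*q^2 - 1/2) (2*c*q) c 0 (funext fun v => by ring)
  obtain ⟨ih3, vh3⟩ := cubic_all ha
    (fun v : ℝ => ((v+q)*v1) * Real.exp (-(a*v^2)))
    (q*v1) v1 0 0 (funext fun v => by ring)
  obtain ⟨ih4, vh4⟩ := cubic_all ha
    (fun v : ℝ => ((v+q)*v1*(c*(v+q)^2 - 1/2)) * Real.exp (-(a*v^2)))
    (v1*(c*q^3 - q/2)) (v1*(3*c*q^2 - 1/2)) (3*c*q*v1) (c*v1) (funext fun v => by ring)
  have I1 : Integrable (fun z : ℝ × ℝ =>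
      (((z.1+p)*v0*(c*(z.1+p)^2 - 1/2)) * Real.exp (-(a*z.1^2))) * Real.exp (-(a*z.2^2)))
      (volume.prod volume) := ig1.mul_prod ig4
  have I2 : Integrable (fun z : ℝ × ℝ =>
      (((z.1+p)*v0) * Real.exp (-(a*z.1^2))) * ((c*(z.2+q)^2 - 1/2) * Real.exp (-(a*z.2^2))))
      (volume.prod volume) := ig2.mul_prod ih2
  have I3 : Integrable (fun z : ℝ × ℝ =>
      ((c*(z.1+p)^2 - 1/2) * Real.exp (-(a*z.1^2))) * (((z.2+q)*v1) * Real.exp (-(a*z.2^2))))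
      (volume.prod volume) := ig3.mul_prod ih3
  have I4 : Integrable (fun z : ℝ × ℝ =>
      (Real.exp (-(a*z.1^2))) * (((z.2+q)*v1*(c*(z.2+q)^2 - 1/2)) * Real.exp (-(a*z.2^2))))
      (volume.prod volume) := ig4.mul_prod ih4
  have I12 : Integrable (fun z : ℝ × ℝ =>
      (((z.1+p)*v0*(c*(z.1+p)^2 - 1/2)) * Real.exp (-(a*z.1^2))) * Real.exp (-(a*z.2^2))
      + (((z.1+p)*v0) * Real.exp (-(a*z.1^2))) * ((c*(z.2+q)^2 - 1/2) * Real.exp (-(a*z.2^2))))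
      (volume.prod volume) := I1.add I2
  have I123 : Integrable (fun z : ℝ × ℝ =>
      (((z.1+p)*v0*(c*(z.1+p)^2 - 1/2)) * Real.exp (-(a*z.1^2))) * Real.exp (-(a*z.2^2))
      + (((z.1+p)*v0) * Real.exp (-(a*z.1^2))) * ((c*(z.2+q)^2 - 1/2) * Real.exp (-(a*z.2^2)))
      + ((c*(z.1+p)^2 - 1/2) * Real.exp (-(a*z.1^2))) * (((z.2+q)*v1) * Real.exp (-(a*z.2^2))))
      (volume.prod volume) := I12.add I3
  rw [integral_add I123 I4, integral_add I12 I3, integral_add I1 I2,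
    integral_prod_mul (fun u : ℝ => ((u+p)*v0*(c*(u+p)^2 - 1/2)) * Real.exp (-(a*u^2)))
      (fun v : ℝ => Real.exp (-(a*v^2))),
    integral_prod_mul (fun u : ℝ => ((u+p)*v0) * Real.exp (-(a*u^2)))
      (fun v : ℝ => (c*(v+q)^2 - 1/2) * Real.exp (-(a*v^2))),
    integral_prod_mul (fun u : ℝ => (c*(u+p)^2 - 1/2) * Real.exp (-(a*u^2)))
      (fun v : ℝ => ((v+q)*v1) * Real.exp (-(a*v^2))),
    integral_prod_mul (fun u : ℝ => Real.exp (-(a*u^2)))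
      (fun v : ℝ => ((v+q)*v1*(c*(v+q)^2 - 1/2)) * Real.exp (-(a*v^2))),
    vg1, vg2, vg3, vg4, vh2, vh3, vh4]
  have ha2 : a = c / (1 - s ^ 2) := by rw [ha_def, hs2]
  rw [inner2, normsq2, ← hv0, ← hv1, hp, hq, ← hs2]
  have h1s : (1:ℝ) - s^2 ≠ 0 := by rw [hs2]; exact ne_of_gt h1σ
  have hA2 : Real.sqrt (π/a) ^ 2 = π * (1 - s ^ 2) / c := by
    rw [sq, Real.mul_self_sqrt (by positivity), ha_def, hs2]
    field_simp
  generalize hAdef : Real.sqrt (π/a) = A at hA2 ⊢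
  rw [ha2]
  ring_nf
  rw [hA2]
  field_simp
  ring
end Moments
end

section
/- Let (a_k)_{k ≥ 1} be a sequence of real numbers and C > 0 a constant such that |a_k − ((k − 1/4)²π² + 1/4)| ≤ C·k^{-2} for all k ≥ 1. Then there exists a constant C′ > 0 such that for all t ∈ (0, 1], |∑_{k=1}^∞ e^{−t·a_k} − ∑_{k=1}^∞ e^{−t·((k − 1/4)²π² + 1/4)}| ≤ C′·t. -/
open Real

lemma exp_lip10 {x y M : ℝ} (hx : x ≤ M) (hy : y ≤ M) :
    |Real.exp x - Real.exp y| ≤ Real.exp M * |x - y| := by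
  wlog h : y ≤ x generalizing x y
  · rw [abs_sub_comm, abs_sub_comm x y]; exact this hy hx (le_of_not_ge h)
  rw [abs_of_nonneg (sub_nonneg.mpr (Real.exp_le_exp.mpr h)),
    abs_of_nonneg (sub_nonneg.mpr h)]
  have h1 : (y - x) + 1 ≤ Real.exp (y - x) := Real.add_one_le_exp _
  have h2 : Real.exp y = Real.exp (y - x) * Real.exp x := by
    rw [← Real.exp_add]; ring_nf
  nlinarith [Real.exp_pos x, Real.exp_le_exp.mpr hx, Real.exp_pos M]

theorem stmt10 (a : ℕ → ℝ) (C : ℝ) (hC : 0 < C)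
    (ha : ∀ k : ℕ, 1 ≤ k →
      |a k - (((k : ℝ) - 1 / 4) ^ 2 * Real.pi ^ 2 + 1 / 4)| ≤ C / (k : ℝ) ^ 2) :
    ∃ C' > 0, ∀ t ∈ Set.Ioc (0 : ℝ) 1,
      |(∑' k : ℕ, Real.exp (-t * a (k + 1))) -
        ∑' k : ℕ, Real.exp (-t * ((((k : ℝ) + 1) - 1 / 4) ^ 2 * Real.pi ^ 2 + 1 / 4))|
      ≤ C' * t := by
  set b : ℕ → ℝ := fun k => (((k : ℝ) + 1) - 1 / 4) ^ 2 * Real.pi ^ 2 + 1 / 4 with hb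
  clear_value b
  have hBasel : Summable (fun k : ℕ => 1 / ((k : ℝ) + 1) ^ 2) := by
    have := (Real.summable_one_div_nat_pow (p := 2)).mpr one_lt_two
    have h2 := (summable_nat_add_iff 1).mpr this
    refine h2.congr fun k => ?_
    push_cast
    ring
  set S : ℝ := ∑' k : ℕ, 1 / ((k : ℝ) + 1) ^ 2 with hS
  clear_value S
  have hS0 : 0 ≤ S := by
    rw [hS]; exact tsum_nonneg fun k => by positivity
  refine ⟨Real.exp C * C * S + 1, by positivity, fun t ht => ?_⟩
  obtain ⟨ht0, ht1⟩ := ht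
  have hbk : ∀ k : ℕ, (k : ℝ) ≤ b k := by
    intro k
    have hk0 : (0 : ℝ) ≤ (k : ℝ) := Nat.cast_nonneg k
    have hpi : (3 : ℝ) < Real.pi := Real.pi_gt_three
    have hpi2 : (9 : ℝ) ≤ Real.pi ^ 2 := by nlinarith
    simp only [hb]
    nlinarith [sq_nonneg ((k : ℝ)),
      mul_nonneg (sq_nonneg ((k : ℝ) + 1 - 1/4)) (by nlinarith : (0:ℝ) ≤ Real.pi ^ 2 - 9)]
  have hbk0 : ∀ k : ℕ, 0 ≤ b k := fun k => le_trans (Nat.cast_nonneg k) (hbk k)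
  have hab : ∀ k : ℕ, |a (k + 1) - b k| ≤ C / ((k : ℝ) + 1) ^ 2 := by
    intro k
    have := ha (k + 1) (by omega)
    push_cast at this
    simpa [hb] using this
  have hcle : ∀ k : ℕ, C / ((k : ℝ) + 1) ^ 2 ≤ C := by
    intro k
    have hk0 : (0 : ℝ) ≤ (k : ℝ) := Nat.cast_nonneg k
    rw [div_le_iff₀ (by positivity)]
    nlinarith [mul_nonneg hC.le (sq_nonneg ((k : ℝ))), mul_nonneg hC.le hk0]
  have htc : ∀ k : ℕ, t * (C / ((k : ℝ) + 1) ^ 2) ≤ C := by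
    intro k
    calc t * (C / ((k : ℝ) + 1) ^ 2) ≤ 1 * C :=
          mul_le_mul ht1 (hcle k) (by positivity) zero_le_one
      _ = C := one_mul C
  have hxb : ∀ k : ℕ, -t * b k ≤ C := by
    intro k
    nlinarith [mul_nonneg ht0.le (hbk0 k)]
  have hxa' : ∀ k : ℕ, -t * a (k + 1) ≤ t * (C / ((k : ℝ) + 1) ^ 2) + -t * b k := by
    intro k
    have h2 : b k - C / ((k : ℝ) + 1) ^ 2 ≤ a (k + 1) := by
      linarith [(abs_le.mp (hab k)).1]
    nlinarith [mul_le_mul_of_nonneg_left h2 ht0.le]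
  have hxa : ∀ k : ℕ, -t * a (k + 1) ≤ C := by
    intro k
    have := hxa' k
    have h0 : -t * b k ≤ 0 := by nlinarith [mul_nonneg ht0.le (hbk0 k)]
    linarith [htc k]
  have hS2 : Summable (fun k : ℕ => Real.exp (-t * b k)) := by
    refine Summable.of_nonneg_of_le (fun k => (Real.exp_pos _).le)
      (fun k => ?_) (summable_geometric_of_lt_one (Real.exp_nonneg _)
        (Real.exp_lt_one_iff.mpr (neg_lt_zero.mpr ht0)))
    rw [← Real.exp_nat_mul]
    apply Real.exp_le_exp.mpr
    nlinarith [mul_le_mul_of_nonneg_left (hbk k) ht0.le]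
  have hS1 : Summable (fun k : ℕ => Real.exp (-t * a (k + 1))) := by
    refine Summable.of_nonneg_of_le (fun k => (Real.exp_pos _).le)
      (fun k => ?_) (hS2.mul_left (Real.exp C))
    rw [← Real.exp_add]
    apply Real.exp_le_exp.mpr
    linarith [hxa' k, htc k]
  have hterm : ∀ k : ℕ, |Real.exp (-t * a (k + 1)) - Real.exp (-t * b k)| ≤
      (Real.exp C * C) * (1 / ((k : ℝ) + 1) ^ 2) * t := by
    intro k
    calc |Real.exp (-t * a (k + 1)) - Real.exp (-t * b k)|
        ≤ Real.exp C * |(-t * a (k + 1)) - (-t * b k)| := exp_lip10 (hxa k) (hxb k)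
      _ = Real.exp C * (t * |a (k + 1) - b k|) := by
          rw [show (-t * a (k + 1)) - (-t * b k) = -t * (a (k + 1) - b k) by ring,
            abs_mul, abs_neg, abs_of_pos ht0]
      _ ≤ Real.exp C * (t * (C / ((k : ℝ) + 1) ^ 2)) := by
          have := hab k
          have h0 := (Real.exp_pos C).le
          gcongr
      _ = (Real.exp C * C) * (1 / ((k : ℝ) + 1) ^ 2) * t := by ring
  have hsumdiff : Summable (fun k : ℕ => Real.exp (-t * a (k + 1)) - Real.exp (-t * b k)) :=
    hS1.sub hS2
  have hmaj : Summable (fun k : ℕ => (Real.exp C * C) * (1 / ((k : ℝ) + 1) ^ 2) * t) :=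
    (hBasel.mul_left (Real.exp C * C)).mul_right t
  have hrw : (∑' k : ℕ, Real.exp (-t * ((((k : ℝ) + 1) - 1 / 4) ^ 2 * Real.pi ^ 2 + 1 / 4)))
      = ∑' k : ℕ, Real.exp (-t * b k) := tsum_congr fun k => by rw [hb]
  rw [hrw]
  calc |(∑' k : ℕ, Real.exp (-t * a (k + 1))) - ∑' k : ℕ, Real.exp (-t * b k)|
      = |∑' k : ℕ, (Real.exp (-t * a (k + 1)) - Real.exp (-t * b k))| := by
        rw [Summable.tsum_sub hS1 hS2]
    _ ≤ ∑' k : ℕ, |Real.exp (-t * a (k + 1)) - Real.exp (-t * b k)| := by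
        have h2 : Summable (fun k : ℕ =>
            ‖Real.exp (-t * a (k + 1)) - Real.exp (-t * b k)‖) := hsumdiff.norm
        have h3 := norm_tsum_le_tsum_norm h2
        simpa using h3
    _ ≤ ∑' k : ℕ, (Real.exp C * C) * (1 / ((k : ℝ) + 1) ^ 2) * t :=
        by
        have habs : Summable (fun k : ℕ =>
            |Real.exp (-t * a (k + 1)) - Real.exp (-t * b k)|) := by
          simpa using hsumdiff.norm
        exact Summable.tsum_le_tsum hterm habs hmaj
    _ = (Real.exp C * C * S) * t := by
        rw [tsum_mul_right, tsum_mul_left, hS]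
    _ ≤ (Real.exp C * C * S + 1) * t := by nlinarith
end

section
/- Define H̃(t) = ∑_{k=1}^∞ exp(−t·((k − 1/4)²π² + 1/4)) for t > 0. Then there exist a real constant c and a constant C > 0 such that for all t ∈ (0, 1], |H̃(t) − ((1/(2√π))·t^{-1/2} + c − (1/(8√π))·t^{1/2})| ≤ C·t. -/
open Real

namespace Stmt12Aux



lemma exp_quad_lb {w : ℝ} (hw : 0 ≤ w) : 1 + w + w ^ 2 / 2 ≤ Real.exp w := by
  have h := Real.sum_le_exp_of_nonneg hw 3
  simp [Finset.sum_range_succ] at h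
  nlinarith [h]

lemma one_sub_exp_neg_ge {b : ℝ} (hb : 0 < b) (hb1 : b ≤ 1) : b / 2 ≤ 1 - Real.exp (-b) := by
  have h1 : 1 + b ≤ Real.exp b := by linarith [Real.add_one_le_exp b]
  have h2 : Real.exp (-b) * Real.exp b = 1 := by rw [← Real.exp_add]; simp
  have h3 : 0 < Real.exp (-b) := Real.exp_pos _
  nlinarith

lemma exp_neg_diff_le {a b : ℝ} (ha : 0 ≤ a) (hab : a ≤ b) :
    Real.exp (-a) - Real.exp (-b) ≤ b - a := by
  have h1 : 1 - (b - a) ≤ Real.exp (-(b - a)) := by linarith [Real.add_one_le_exp (-(b-a))]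
  have h2 : Real.exp (-b) = Real.exp (-a) * Real.exp (-(b - a)) := by
    rw [← Real.exp_add]; ring_nf
  have h3 : Real.exp (-a) ≤ 1 := Real.exp_le_one_iff.mpr (by linarith)
  have h4 : 0 < Real.exp (-a) := Real.exp_pos _
  nlinarith

lemma exp_neg_diff_nonneg {a b : ℝ} (hab : a ≤ b) :
    0 ≤ Real.exp (-a) - Real.exp (-b) := by
  have := Real.exp_le_exp.mpr (neg_le_neg hab)
  linarith

lemma tsum_exp_neg_le {b : ℝ} (hb : 0 < b) (hb1 : b ≤ 1) :
    (∑' k : ℕ, Real.exp (-b) ^ k) ≤ 2 / b := by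
  rw [tsum_geometric_of_lt_one (Real.exp_pos _).le
    (Real.exp_lt_one_iff.mpr (by linarith))]
  have h := one_sub_exp_neg_ge hb hb1
  have h2 : (2:ℝ) / b = (b / 2)⁻¹ := by field_simp
  rw [h2]
  exact inv_anti₀ (by linarith) h

lemma summable_exp_quad {c : ℝ} (hc : 0 < c) {g : ℕ → ℝ} (hg : ∀ n : ℕ, (n : ℝ) ≤ g n) :
    Summable fun n : ℕ => Real.exp (-(c * g n)) := by
  apply Summable.of_nonneg_of_le (fun n => (Real.exp_pos _).le) (fun n => ?_)
    (summable_geometric_of_lt_one (Real.exp_pos (-c)).le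
      (Real.exp_lt_one_iff.mpr (by linarith)))
  rw [← Real.exp_nat_mul]
  apply Real.exp_le_exp.2
  have := hg n
  nlinarith

lemma euler {f : ℕ → ℝ} (hf : Summable f) :
    (∑' k : ℕ, (-1 : ℝ) ^ k * (f k - f (k + 1))) =
      2 * (∑' k : ℕ, (-1 : ℝ) ^ k * f k) - f 0 := by
  have hg : Summable (fun k : ℕ => (-1 : ℝ) ^ k * f k) := by
    apply Summable.of_norm_bounded hf.abs
    intro k
    simp [abs_mul]
  have hg1 : Summable (fun k : ℕ => (-1 : ℝ) ^ (k + 1) * f (k + 1)) :=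
    (summable_nat_add_iff 1).mpr hg
  have key : ∀ k : ℕ, (-1 : ℝ) ^ k * (f k - f (k + 1)) =
      (-1 : ℝ) ^ k * f k + (-1 : ℝ) ^ (k + 1) * f (k + 1) := by
    intro k; ring
  rw [tsum_congr key, Summable.tsum_add hg hg1]
  have h0 := Summable.tsum_eq_zero_add hg
  simp only [pow_zero, one_mul] at h0
  have : (∑' k : ℕ, (-1 : ℝ) ^ (k + 1) * f (k + 1)) =
      (∑' k : ℕ, (-1 : ℝ) ^ k * f k) - f 0 := by linarith
  rw [this]; ring

lemma mvt_bound {f f' : ℝ → ℝ} (hf : ∀ x, HasDerivAt f (f' x) x) {a b B : ℝ}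
    (hab : a ≤ b) (hB : ∀ x ∈ Set.Icc a b, |f' x| ≤ B) : |f b - f a| ≤ B * (b - a) := by
  rcases eq_or_lt_of_le hab with h | h
  · subst h; simp
  · obtain ⟨c, hc, hc'⟩ := exists_hasDerivAt_eq_slope f f' h
      (fun x _ => (hf x).continuousAt.continuousWithinAt)
      (fun x _ => hf x)
    have hba : b - a ≠ 0 := by linarith
    have : f b - f a = f' c * (b - a) := by
      rw [hc']; field_simp
    rw [this, abs_mul, abs_of_pos (by linarith : (0:ℝ) < b - a)]
    have hcmem : c ∈ Set.Icc a b := ⟨hc.1.le, hc.2.le⟩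
    exact mul_le_mul_of_nonneg_right (hB c hcmem) (by linarith)




noncomputable def Ek (s x : ℝ) : ℝ := Real.exp (-(s * (2 * x + 1) ^ 2))

lemma Ek_pos (s x : ℝ) : 0 < Ek s x := Real.exp_pos _

lemma hasDerivAt_Ek (s x : ℝ) :
    HasDerivAt (Ek s) (-(4 * s * (2 * x + 1)) * Ek s x) x := by
  have h0 : HasDerivAt (fun x : ℝ => 2 * x + 1) 2 x := by
    simpa using ((hasDerivAt_id x).const_mul 2).add_const 1
  have h1 := ((h0.pow 2).const_mul s).neg
  have h2 := h1.exp
  unfold Ek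
  refine h2.congr_deriv ?_
  norm_num [Pi.neg_apply, Pi.pow_apply]
  ring

lemma hasDerivAt_Ek1 (s x : ℝ) :
    HasDerivAt (fun x => -(4 * s * (2 * x + 1)) * Ek s x)
      ((16 * s ^ 2 * (2 * x + 1) ^ 2 - 8 * s) * Ek s x) x := by
  have h0 : HasDerivAt (fun x : ℝ => -(4 * s * (2 * x + 1))) (-(8 * s)) x := by
    have : HasDerivAt (fun x : ℝ => 2 * x + 1) 2 x := by
      simpa using ((hasDerivAt_id x).const_mul 2).add_const 1
    have := (this.const_mul (4 * s)).neg
    refine this.congr_deriv ?_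
    ring
  have := h0.mul (hasDerivAt_Ek s x)
  refine this.congr_deriv ?_
  unfold Ek
  ring

lemma hasDerivAt_Ek2 (s x : ℝ) :
    HasDerivAt (fun x => (16 * s ^ 2 * (2 * x + 1) ^ 2 - 8 * s) * Ek s x)
      ((96 * s ^ 2 * (2 * x + 1) - 64 * s ^ 3 * (2 * x + 1) ^ 3) * Ek s x) x := by
  have h0 : HasDerivAt (fun x : ℝ => 16 * s ^ 2 * (2 * x + 1) ^ 2 - 8 * s)
      (64 * s ^ 2 * (2 * x + 1)) x := by
    have h1 : HasDerivAt (fun x : ℝ => 2 * x + 1) 2 x := by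
      simpa using ((hasDerivAt_id x).const_mul 2).add_const 1
    have := ((h1.pow 2).const_mul (16 * s ^ 2)).sub_const (8 * s)
    refine this.congr_deriv ?_
    ring
  have := h0.mul (hasDerivAt_Ek s x)
  refine this.congr_deriv ?_
  unfold Ek
  ring

lemma key_y1 {y : ℝ} (hy : 0 ≤ y) : (y + 1) * Real.exp (-(y ^ 2)) ≤ 2 := by
  have h1 : y ^ 2 + 1 ≤ Real.exp (y ^ 2) := by linarith [Real.add_one_le_exp (y ^ 2)]
  have h2 : Real.exp (-(y ^ 2)) * Real.exp (y ^ 2) = 1 := by rw [← Real.exp_add]; simp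
  have h3 : 0 < Real.exp (-(y ^ 2)) := Real.exp_pos _
  nlinarith [sq_nonneg (y - 1), sq_nonneg y]

lemma key_y3 {y : ℝ} (hy : 0 ≤ y) : (y + 1) ^ 3 * Real.exp (-(y ^ 2)) ≤ 12 := by
  have h1 : 1 + y ^ 2 + (y ^ 2) ^ 2 / 2 ≤ Real.exp (y ^ 2) := exp_quad_lb (by positivity)
  have h2 : Real.exp (-(y ^ 2)) * Real.exp (y ^ 2) = 1 := by rw [← Real.exp_add]; simp
  have h3 : 0 < Real.exp (-(y ^ 2)) := Real.exp_pos _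
  have h4 : (y + 1) ^ 3 ≤ 12 * (1 + y ^ 2 + (y ^ 2) ^ 2 / 2) := by nlinarith [sq_nonneg y, sq_nonneg (y - 1), sq_nonneg (y ^ 2 - y)]
  nlinarith

lemma sqrt_half_le_one {s : ℝ} (hs : 0 < s) (hs1 : s ≤ 1) : Real.sqrt (s / 2) ≤ 1 := by
  rw [show (1:ℝ) = Real.sqrt 1 by simp]
  exact Real.sqrt_le_sqrt (by linarith)

lemma pointwise_bound {s : ℝ} (hs : 0 < s) (hs1 : s ≤ 1) (j : ℕ) (Nj : ℝ)
    (hNj : ∀ y : ℝ, 0 ≤ y → (y + 1) ^ j * Real.exp (-(y ^ 2)) ≤ Nj) (k : ℕ) :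
    ((k : ℝ) + 1) ^ j * Real.exp (-(s * (k : ℝ) ^ 2)) ≤
      (3 * Nj / Real.sqrt (s / 2) ^ j) * Real.exp (-Real.sqrt (s / 2)) ^ k := by
  set b := Real.sqrt (s / 2) with hbdef
  have hb : 0 < b := Real.sqrt_pos.2 (by linarith)
  have hb2 : b ^ 2 = s / 2 := Real.sq_sqrt (by linarith)
  have hb1 : b ≤ 1 := sqrt_half_le_one hs hs1
  set y : ℝ := b * k with hydef
  have hy : 0 ≤ y := by positivity
  have hNy := hNj y hy
  have hNy0 : 0 ≤ Nj := le_trans (by positivity) hNy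
  -- split the exponential
  have hsplit : Real.exp (-(s * (k : ℝ) ^ 2)) = Real.exp (-(y ^ 2)) * Real.exp (-(y ^ 2)) := by
    rw [← Real.exp_add]
    congr 1
    have : y ^ 2 = s / 2 * (k : ℝ) ^ 2 := by rw [hydef]; rw [mul_pow, hb2]
    rw [this]; ring
  -- (k+1) ≤ (y+1)/b
  have hk1 : ((k : ℝ) + 1) ≤ (y + 1) / b := by
    rw [hydef, le_div_iff₀ hb]
    have : (0:ℝ) ≤ (k:ℝ) := Nat.cast_nonneg k
    nlinarith
  have hk1j : ((k : ℝ) + 1) ^ j ≤ (y + 1) ^ j / b ^ j := by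
    rw [← div_pow]
    exact pow_le_pow_left₀ (by positivity) hk1 j
  -- e^{-y²} ≤ 3 e^{-y}
  have hE3 : Real.exp (-(y ^ 2)) ≤ 3 * Real.exp (-y) := by
    have h1 : -(y ^ 2) ≤ 1 + -y := by nlinarith [sq_nonneg (y - 1)]
    calc Real.exp (-(y ^ 2)) ≤ Real.exp (1 + -y) := Real.exp_le_exp.2 h1
      _ = Real.exp 1 * Real.exp (-y) := Real.exp_add 1 (-y)
      _ ≤ 3 * Real.exp (-y) := by
          have := Real.exp_one_lt_d9
          have hp := Real.exp_pos (-y)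
          nlinarith
  have hgeom : Real.exp (-y) = Real.exp (-b) ^ k := by
    rw [← Real.exp_nat_mul, hydef]; ring_nf
  calc ((k : ℝ) + 1) ^ j * Real.exp (-(s * (k : ℝ) ^ 2))
      = (((k : ℝ) + 1) ^ j * Real.exp (-(y ^ 2))) * Real.exp (-(y ^ 2)) := by
        rw [hsplit]; ring
    _ ≤ (((y + 1) ^ j / b ^ j) * Real.exp (-(y ^ 2))) * (3 * Real.exp (-y)) := by
        apply mul_le_mul
        · exact mul_le_mul_of_nonneg_right hk1j (Real.exp_pos _).le
        · exact hE3
        · exact (Real.exp_pos _).le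
        · positivity
    _ = (3 * ((y + 1) ^ j * Real.exp (-(y ^ 2))) / b ^ j) * Real.exp (-y) := by ring
    _ ≤ (3 * Nj / b ^ j) * Real.exp (-y) := by
        apply mul_le_mul_of_nonneg_right _ (Real.exp_pos _).le
        apply div_le_div_of_nonneg_right ?_ (by positivity)
        · nlinarith
    _ = (3 * Nj / b ^ j) * Real.exp (-b) ^ k := by rw [hgeom]

lemma key_sum {s : ℝ} (hs : 0 < s) (hs1 : s ≤ 1) (j : ℕ) (Nj : ℝ)
    (hNj : ∀ y : ℝ, 0 ≤ y → (y + 1) ^ j * Real.exp (-(y ^ 2)) ≤ Nj) :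
    Summable (fun k : ℕ => ((k : ℝ) + 1) ^ j * Real.exp (-(s * (k : ℝ) ^ 2))) ∧
    (∑' k : ℕ, ((k : ℝ) + 1) ^ j * Real.exp (-(s * (k : ℝ) ^ 2))) ≤
      6 * Nj / Real.sqrt (s / 2) ^ (j + 1) := by
  set b := Real.sqrt (s / 2) with hbdef
  have hb : 0 < b := Real.sqrt_pos.2 (by linarith)
  have hb1 : b ≤ 1 := sqrt_half_le_one hs hs1
  have hNy0 : 0 ≤ Nj := le_trans (by positivity) (hNj 0 le_rfl)
  have hgs : Summable (fun k : ℕ => (3 * Nj / b ^ j) * Real.exp (-b) ^ k) :=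
    (summable_geometric_of_lt_one (Real.exp_pos _).le
      (Real.exp_lt_one_iff.mpr (by linarith))).mul_left _
  have hsum : Summable (fun k : ℕ => ((k : ℝ) + 1) ^ j * Real.exp (-(s * (k : ℝ) ^ 2))) := by
    apply Summable.of_nonneg_of_le (fun k => by positivity)
      (pointwise_bound hs hs1 j Nj hNj) hgs
  refine ⟨hsum, ?_⟩
  calc (∑' k : ℕ, ((k : ℝ) + 1) ^ j * Real.exp (-(s * (k : ℝ) ^ 2)))
      ≤ ∑' k : ℕ, (3 * Nj / b ^ j) * Real.exp (-b) ^ k :=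
        Summable.tsum_le_tsum (pointwise_bound hs hs1 j Nj hNj) hsum hgs
    _ = (3 * Nj / b ^ j) * ∑' k : ℕ, Real.exp (-b) ^ k := tsum_mul_left
    _ ≤ (3 * Nj / b ^ j) * (2 / b) := by
        apply mul_le_mul_of_nonneg_left (tsum_exp_neg_le hb hb1) (by positivity)
    _ = 6 * Nj / b ^ (j + 1) := by
        rw [pow_succ]
        field_simp
        ring
noncomputable def d0 (s : ℝ) (k : ℕ) : ℝ := Real.exp (-(s * (2 * (k : ℝ) + 1) ^ 2))
noncomputable def dd1 (s : ℝ) (k : ℕ) : ℝ := d0 s k - d0 s (k + 1)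
noncomputable def dd2 (s : ℝ) (k : ℕ) : ℝ := dd1 s k - dd1 s (k + 1)
noncomputable def dd3 (s : ℝ) (k : ℕ) : ℝ := dd2 s k - dd2 s (k + 1)

noncomputable def Bf (s : ℝ) (k : ℕ) : ℝ :=
  (96 * s ^ 2 * (2 * (k : ℝ) + 7) + 64 * s ^ 3 * (2 * (k : ℝ) + 7) ^ 3) *
    Real.exp (-(s * (2 * (k : ℝ) + 1) ^ 2))

lemma d3_bound {s : ℝ} (hs : 0 < s) (k : ℕ) : |dd3 s k| ≤ Bf s k := by
  set K : ℝ := (k : ℝ) with hKdef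
  have hK0 : 0 ≤ K := Nat.cast_nonneg k
  set B : ℝ := Bf s k with hBdef
  -- third derivative bound on [K, K+3]
  have hbound3 : ∀ w : ℝ, K ≤ w → w ≤ K + 3 →
      |(96 * s ^ 2 * (2 * w + 1) - 64 * s ^ 3 * (2 * w + 1) ^ 3) * Ek s w| ≤ B := by
    intro w h1 h2
    rw [abs_mul, abs_of_pos (Ek_pos s w)]
    have hu1 : (1 : ℝ) ≤ 2 * w + 1 := by linarith
    have hu2 : 2 * w + 1 ≤ 2 * K + 7 := by linarith
    have hp1 : (0:ℝ) ≤ 96 * s ^ 2 * (2 * w + 1) := by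
      have := sq_nonneg s; nlinarith
    have hp2 : (0:ℝ) ≤ 64 * s ^ 3 * (2 * w + 1) ^ 3 :=
      mul_nonneg (by positivity) (pow_nonneg (by linarith) 3)
    have habs : |96 * s ^ 2 * (2 * w + 1) - 64 * s ^ 3 * (2 * w + 1) ^ 3| ≤
        96 * s ^ 2 * (2 * w + 1) + 64 * s ^ 3 * (2 * w + 1) ^ 3 := by
      rw [abs_le]; constructor <;> nlinarith
    have hcube : (2 * w + 1) ^ 3 ≤ (2 * K + 7) ^ 3 :=
      pow_le_pow_left₀ (by linarith) hu2 3
    have hmono : 96 * s ^ 2 * (2 * w + 1) + 64 * s ^ 3 * (2 * w + 1) ^ 3 ≤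
        96 * s ^ 2 * (2 * K + 7) + 64 * s ^ 3 * (2 * K + 7) ^ 3 := by
      have h3 : (0:ℝ) ≤ s ^ 3 := by positivity
      have h2' : (0:ℝ) ≤ s ^ 2 := sq_nonneg s
      nlinarith
    have hEk : Ek s w ≤ Real.exp (-(s * (2 * K + 1) ^ 2)) := by
      unfold Ek
      apply Real.exp_le_exp.2
      have : (2 * K + 1) ^ 2 ≤ (2 * w + 1) ^ 2 := by nlinarith
      nlinarith
    calc |96 * s ^ 2 * (2 * w + 1) - 64 * s ^ 3 * (2 * w + 1) ^ 3| * Ek s w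
        ≤ (96 * s ^ 2 * (2 * K + 7) + 64 * s ^ 3 * (2 * K + 7) ^ 3) *
            Real.exp (-(s * (2 * K + 1) ^ 2)) := by
          apply mul_le_mul (le_trans habs hmono) hEk (Ek_pos s w).le
          nlinarith
      _ = B := by rw [hBdef]; unfold Bf; rw [← hKdef]
  -- second difference of first derivative
  have hstep2 : ∀ z : ℝ, K ≤ z → z ≤ K + 2 →
      |(16 * s ^ 2 * (2 * (z + 1) + 1) ^ 2 - 8 * s) * Ek s (z + 1) -
       (16 * s ^ 2 * (2 * z + 1) ^ 2 - 8 * s) * Ek s z| ≤ B := by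
    intro z h1 h2
    have h := mvt_bound (f' := fun x => (96 * s ^ 2 * (2 * x + 1) -
        64 * s ^ 3 * (2 * x + 1) ^ 3) * Ek s x)
      (hasDerivAt_Ek2 s) (by linarith : z ≤ z + 1)
      (fun x hx => hbound3 x (by linarith [hx.1]) (by linarith [hx.2]))
    rw [show z + 1 - z = 1 by ring, mul_one] at h
    exact h
  -- first difference chain
  have hstep1 : ∀ y : ℝ, K ≤ y → y ≤ K + 1 →
      |(-(4 * s * (2 * (y + 2) + 1)) * Ek s (y + 2) - -(4 * s * (2 * (y + 1) + 1)) * Ek s (y + 1)) -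
       (-(4 * s * (2 * (y + 1) + 1)) * Ek s (y + 1) - -(4 * s * (2 * y + 1)) * Ek s y)| ≤ B := by
    intro y h1 h2
    have hder : ∀ z : ℝ, HasDerivAt
        (fun x => -(4 * s * (2 * (x + 1) + 1)) * Ek s (x + 1) - -(4 * s * (2 * x + 1)) * Ek s x)
        ((16 * s ^ 2 * (2 * (z + 1) + 1) ^ 2 - 8 * s) * Ek s (z + 1) -
         (16 * s ^ 2 * (2 * z + 1) ^ 2 - 8 * s) * Ek s z) z := by
      intro z
      exact (HasDerivAt.comp_add_const z 1 (hasDerivAt_Ek1 s (z + 1))).sub (hasDerivAt_Ek1 s z)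
    have h := mvt_bound hder (by linarith : y ≤ y + 1)
      (fun x hx => hstep2 x (by linarith [hx.1]) (by linarith [hx.2]))
    rw [show y + 1 - y = 1 by ring, mul_one] at h
    have harg : y + 1 + 1 = y + 2 := by ring
    rw [harg] at h
    exact h
  -- zeroth level
  have hder0 : ∀ z : ℝ, HasDerivAt
      (fun x => (Ek s (x + 2) - Ek s (x + 1)) - (Ek s (x + 1) - Ek s x))
      ((-(4 * s * (2 * (z + 2) + 1)) * Ek s (z + 2) - -(4 * s * (2 * (z + 1) + 1)) * Ek s (z + 1)) -
       (-(4 * s * (2 * (z + 1) + 1)) * Ek s (z + 1) - -(4 * s * (2 * z + 1)) * Ek s z)) z := by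
    intro z
    exact ((HasDerivAt.comp_add_const z 2 (hasDerivAt_Ek s (z + 2))).sub
        (HasDerivAt.comp_add_const z 1 (hasDerivAt_Ek s (z + 1)))).sub
      ((HasDerivAt.comp_add_const z 1 (hasDerivAt_Ek s (z + 1))).sub (hasDerivAt_Ek s z))
  have h := mvt_bound hder0 (by linarith : K ≤ K + 1)
    (fun x hx => hstep1 x hx.1 hx.2)
  rw [show K + 1 - K = 1 by ring, mul_one] at h
  -- identify dd3 with the difference of the real function
  have hid : dd3 s k = -(((Ek s (K + 1 + 2) - Ek s (K + 1 + 1)) - (Ek s (K + 1 + 1) - Ek s (K + 1))) -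
      ((Ek s (K + 2) - Ek s (K + 1)) - (Ek s (K + 1) - Ek s K))) := by
    simp only [dd3, dd2, dd1, d0, Ek, hKdef]
    push_cast
    ring_nf
  rw [hid, abs_neg]
  exact h
lemma euler' {f g : ℕ → ℝ} (hf : Summable f) (hg : ∀ k, g k = f k - f (k + 1)) :
    (∑' k : ℕ, (-1 : ℝ) ^ k * g k) = 2 * (∑' k : ℕ, (-1 : ℝ) ^ k * f k) - f 0 := by
  rw [tsum_congr (fun k => by rw [hg k])]
  exact euler hf

lemma summable_d0 {s : ℝ} (hs : 0 < s) : Summable (d0 s) := by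
  apply summable_exp_quad hs (g := fun n : ℕ => (2 * (n : ℝ) + 1) ^ 2)
  intro n
  have := Nat.cast_nonneg (α := ℝ) n
  nlinarith [sq_nonneg ((n : ℝ))]

set_option maxHeartbeats 2000000 in
lemma Fbound {s : ℝ} (hs : 0 < s) (hs1 : s ≤ 1) :
    |(∑' k : ℕ, (-1 : ℝ) ^ k * Real.exp (-(s * (2 * (k : ℝ) + 1) ^ 2))) - 1 / 2| ≤
      1000000 * s := by
  have hsf : Summable (d0 s) := summable_d0 hs
  have hsf1 : Summable (dd1 s) := by
    have := hsf.sub ((summable_nat_add_iff 1).2 hsf)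
    exact this.congr (fun k => by simp only [dd1])
  have hsf2 : Summable (dd2 s) := by
    have := hsf1.sub ((summable_nat_add_iff 1).2 hsf1)
    exact this.congr (fun k => by simp only [dd2])
  have hsf3 : Summable (dd3 s) := by
    have := hsf2.sub ((summable_nat_add_iff 1).2 hsf2)
    exact this.congr (fun k => by simp only [dd3])
  have e1 := euler' hsf (g := dd1 s) (fun k => rfl)
  have e2 := euler' hsf1 (g := dd2 s) (fun k => rfl)
  have e3 := euler' hsf2 (g := dd3 s) (fun k => rfl)
  set S0 := ∑' k : ℕ, (-1 : ℝ) ^ k * d0 s k with hS0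
  set S3 := ∑' k : ℕ, (-1 : ℝ) ^ k * dd3 s k with hS3
  -- the target sum is S0
  have htarget : (∑' k : ℕ, (-1 : ℝ) ^ k * Real.exp (-(s * (2 * (k : ℝ) + 1) ^ 2))) = S0 := by
    rw [hS0]
    exact tsum_congr (fun k => by simp only [d0])
  rw [htarget]
  -- sum bounds for Bf
  have hkey1 := key_sum hs hs1 1 2 (fun y hy => by simpa using key_y1 hy)
  have hkey3 := key_sum hs hs1 3 12 (fun y hy => key_y3 hy)
  have hb2 : Real.sqrt (s / 2) ^ 2 = s / 2 := Real.sq_sqrt (by linarith)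
  have hbpos : 0 < Real.sqrt (s / 2) := Real.sqrt_pos.2 (by linarith)
  have hT1 : (∑' k : ℕ, ((k : ℝ) + 1) ^ 1 * Real.exp (-(s * (k : ℝ) ^ 2))) ≤ 24 / s := by
    refine le_trans hkey1.2 ?_
    rw [show (1:ℕ) + 1 = 2 by norm_num, hb2]
    rw [div_le_div_iff₀ (by positivity) hs]
    ring_nf
    nlinarith
  have hT3 : (∑' k : ℕ, ((k : ℝ) + 1) ^ 3 * Real.exp (-(s * (k : ℝ) ^ 2))) ≤ 288 / s ^ 2 := by
    refine le_trans hkey3.2 ?_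
    have hb4 : Real.sqrt (s / 2) ^ 4 = s ^ 2 / 4 := by
      rw [show (4:ℕ) = 2 * 2 by norm_num, pow_mul, hb2]; ring
    rw [hb4]
    rw [div_le_div_iff₀ (by positivity) (by positivity)]
    nlinarith
  -- pointwise comparison for Bf
  have hBle : ∀ k : ℕ, Bf s k ≤ 672 * s ^ 2 * (((k : ℝ) + 1) ^ 1 * Real.exp (-(s * (k : ℝ) ^ 2)))
      + 21952 * s ^ 3 * (((k : ℝ) + 1) ^ 3 * Real.exp (-(s * (k : ℝ) ^ 2))) := by
    intro k
    have hK0 : (0:ℝ) ≤ (k : ℝ) := Nat.cast_nonneg k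
    set K : ℝ := (k : ℝ) with hKdef
    have hexp : Real.exp (-(s * (2 * K + 1) ^ 2)) ≤ Real.exp (-(s * K ^ 2)) := by
      apply Real.exp_le_exp.2
      nlinarith
    have hc1 : 96 * s ^ 2 * (2 * K + 7) ≤ 672 * s ^ 2 * (K + 1) ^ 1 := by
      have := sq_nonneg s; nlinarith
    have hc3 : 64 * s ^ 3 * (2 * K + 7) ^ 3 ≤ 21952 * s ^ 3 * (K + 1) ^ 3 := by
      have h3 : (0:ℝ) ≤ s ^ 3 := by positivity
      have hcube : (2 * K + 7) ^ 3 ≤ (7 * (K + 1)) ^ 3 :=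
        pow_le_pow_left₀ (by linarith) (by linarith) 3
      nlinarith
    have hsum0 : (0:ℝ) ≤ 96 * s ^ 2 * (2 * K + 7) + 64 * s ^ 3 * (2 * K + 7) ^ 3 := by
      have h3 : (0:ℝ) ≤ s ^ 3 := by positivity
      have := sq_nonneg s
      nlinarith [pow_nonneg (by linarith : (0:ℝ) ≤ 2 * K + 7) 3]
    calc Bf s k = (96 * s ^ 2 * (2 * K + 7) + 64 * s ^ 3 * (2 * K + 7) ^ 3) *
          Real.exp (-(s * (2 * K + 1) ^ 2)) := by simp only [Bf, hKdef]
      _ ≤ (672 * s ^ 2 * (K + 1) ^ 1 + 21952 * s ^ 3 * (K + 1) ^ 3) *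
          Real.exp (-(s * K ^ 2)) := by
          apply mul_le_mul (by linarith) hexp (Real.exp_pos _).le
          have h3 : (0:ℝ) ≤ s ^ 3 := by positivity
          have := sq_nonneg s
          nlinarith [pow_nonneg (by linarith : (0:ℝ) ≤ K + 1) 3, pow_nonneg hK0 1,
            pow_nonneg (by linarith : (0:ℝ) ≤ K + 1) 1]
      _ = 672 * s ^ 2 * ((K + 1) ^ 1 * Real.exp (-(s * K ^ 2)))
          + 21952 * s ^ 3 * ((K + 1) ^ 3 * Real.exp (-(s * K ^ 2))) := by ring
  have hscomp : Summable (fun k : ℕ =>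
      672 * s ^ 2 * (((k : ℝ) + 1) ^ 1 * Real.exp (-(s * (k : ℝ) ^ 2)))
      + 21952 * s ^ 3 * (((k : ℝ) + 1) ^ 3 * Real.exp (-(s * (k : ℝ) ^ 2)))) :=
    (hkey1.1.mul_left _).add (hkey3.1.mul_left _)
  have hBpos : ∀ k : ℕ, 0 ≤ Bf s k := by
    intro k
    have hK0 : (0:ℝ) ≤ (k : ℝ) := Nat.cast_nonneg k
    apply mul_nonneg _ (Real.exp_pos _).le
    have h3 : (0:ℝ) ≤ s ^ 3 := by positivity
    have := sq_nonneg s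
    nlinarith [pow_nonneg (by linarith : (0:ℝ) ≤ 2 * (k:ℝ) + 7) 3]
  have hsB : Summable (Bf s) := Summable.of_nonneg_of_le hBpos hBle hscomp
  have htsumB : (∑' k : ℕ, Bf s k) ≤ 6400000 * s := by
    calc (∑' k : ℕ, Bf s k)
        ≤ ∑' k : ℕ, (672 * s ^ 2 * (((k : ℝ) + 1) ^ 1 * Real.exp (-(s * (k : ℝ) ^ 2)))
          + 21952 * s ^ 3 * (((k : ℝ) + 1) ^ 3 * Real.exp (-(s * (k : ℝ) ^ 2)))) :=
          Summable.tsum_le_tsum hBle hsB hscomp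
      _ = 672 * s ^ 2 * (∑' k : ℕ, ((k : ℝ) + 1) ^ 1 * Real.exp (-(s * (k : ℝ) ^ 2)))
          + 21952 * s ^ 3 * (∑' k : ℕ, ((k : ℝ) + 1) ^ 3 * Real.exp (-(s * (k : ℝ) ^ 2))) := by
          rw [Summable.tsum_add (hkey1.1.mul_left _) (hkey3.1.mul_left _), tsum_mul_left, tsum_mul_left]
      _ ≤ 672 * s ^ 2 * (24 / s) + 21952 * s ^ 3 * (288 / s ^ 2) := by
          apply add_le_add
          · exact mul_le_mul_of_nonneg_left hT1 (by positivity)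
          · exact mul_le_mul_of_nonneg_left hT3 (by positivity)
      _ ≤ 6400000 * s := by
          have hne : s ≠ 0 := ne_of_gt hs
          have h1 : 672 * s ^ 2 * (24 / s) = 16128 * s := by field_simp; ring
          have h2 : 21952 * s ^ 3 * (288 / s ^ 2) = 6322176 * s := by field_simp; ring
          rw [h1, h2]; linarith
  -- bound |S3|
  have hS3le : |S3| ≤ 6400000 * s := by
    have h1 : |S3| ≤ ∑' k : ℕ, |dd3 s k| := by
      rw [hS3]
      have := norm_tsum_le_tsum_norm (f := fun k : ℕ => (-1 : ℝ) ^ k * dd3 s k) ?_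
      · simpa [abs_mul] using this
      · apply Summable.congr hsf3.abs
        intro k
        simp [abs_mul]
    refine le_trans h1 (le_trans (Summable.tsum_le_tsum (fun k => d3_bound hs k) hsf3.abs hsB) htsumB)
  -- boundary terms
  have ha : |d0 s 0 - 1| ≤ s := by
    have h0 : d0 s 0 = Real.exp (-s) := by
      simp only [d0]; norm_num
    rw [h0]
    have h1 := Real.add_one_le_exp (-s)
    have h2 : Real.exp (-s) ≤ 1 := Real.exp_le_one_iff.mpr (by linarith)
    rw [abs_le]; constructor <;> linarith
  have hd1id : dd1 s 0 = Real.exp (-s) - Real.exp (-(s * 9)) := by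
    simp only [dd1, d0]; norm_num
  have hb' : |dd1 s 0| ≤ 8 * s := by
    rw [hd1id, abs_le]
    have h1 := exp_neg_diff_le (le_of_lt hs) (by linarith : s ≤ s * 9)
    have h2 := exp_neg_diff_nonneg (by linarith : s ≤ s * 9)
    constructor <;> linarith
  have hd2id : dd2 s 0 = (Real.exp (-s) - Real.exp (-(s * 9)))
      - (Real.exp (-(s * 9)) - Real.exp (-(s * 25))) := by
    simp only [dd2, dd1, d0]; norm_num
  have hc' : |dd2 s 0| ≤ 24 * s := by
    rw [hd2id, abs_le]
    have h1 := exp_neg_diff_le (le_of_lt hs) (by linarith : s ≤ s * 9)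
    have h2 := exp_neg_diff_nonneg (by linarith : s ≤ s * 9)
    have h3 := exp_neg_diff_le (by linarith : (0:ℝ) ≤ s * 9) (by linarith : s * 9 ≤ s * 25)
    have h4 := exp_neg_diff_nonneg (by linarith : s * 9 ≤ s * 25)
    constructor <;> linarith
  -- final arithmetic
  have hS0eq : S0 = (S3 + dd2 s 0 + 2 * dd1 s 0 + 4 * d0 s 0) / 8 := by
    linarith [e1, e2, e3]
  rw [hS0eq]
  have h1 : |S3 + dd2 s 0 + 2 * dd1 s 0 + 4 * d0 s 0 - 4| ≤
      |S3| + |dd2 s 0| + 2 * |dd1 s 0| + 4 * |d0 s 0 - 1| := by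
    have := abs_add_le (S3 + dd2 s 0 + 2 * dd1 s 0) (4 * (d0 s 0 - 1))
    have h2 := abs_add_le (S3 + dd2 s 0) (2 * dd1 s 0)
    have h3 := abs_add_le S3 (dd2 s 0)
    rw [abs_mul] at *
    calc |S3 + dd2 s 0 + 2 * dd1 s 0 + 4 * d0 s 0 - 4|
        = |(S3 + dd2 s 0 + 2 * dd1 s 0) + 4 * (d0 s 0 - 1)| := by ring_nf
      _ ≤ |S3 + dd2 s 0 + 2 * dd1 s 0| + |(4:ℝ)| * |d0 s 0 - 1| := by
          rw [← abs_mul]; exact abs_add_le _ _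
      _ ≤ |S3| + |dd2 s 0| + |(2:ℝ)| * |dd1 s 0| + |(4:ℝ)| * |d0 s 0 - 1| := by
          rw [← abs_mul]
          have := abs_add_le (S3 + dd2 s 0) (2 * dd1 s 0)
          rw [abs_mul] at this
          linarith [abs_add_le S3 (dd2 s 0)]
      _ = |S3| + |dd2 s 0| + 2 * |dd1 s 0| + 4 * |d0 s 0 - 1| := by norm_num
  have habs8 : |(S3 + dd2 s 0 + 2 * dd1 s 0 + 4 * d0 s 0) / 8 - 1 / 2| =
      |S3 + dd2 s 0 + 2 * dd1 s 0 + 4 * d0 s 0 - 4| / 8 := by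
    rw [show (S3 + dd2 s 0 + 2 * dd1 s 0 + 4 * d0 s 0) / 8 - 1 / 2 =
      (S3 + dd2 s 0 + 2 * dd1 s 0 + 4 * d0 s 0 - 4) / 8 by ring, abs_div]
    norm_num
  rw [habs8]
  rw [div_le_iff₀ (by norm_num : (0:ℝ) < 8)]
  linarith
lemma summable_G {t : ℝ} (ht : 0 < t) :
    Summable (fun n : ℕ => Real.exp (-(t * π ^ 2 * ((n : ℝ) + 1 / 4) ^ 2))) := by
  apply summable_exp_quad (by positivity : 0 < t * π ^ 2)
    (g := fun n : ℕ => ((n : ℝ) + 1 / 4) ^ 2)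
  intro n
  nlinarith [sq_nonneg ((n : ℝ) - 1 / 4)]

lemma summable_Hh {t : ℝ} (ht : 0 < t) :
    Summable (fun n : ℕ => Real.exp (-(t * π ^ 2 * ((n : ℝ) + 3 / 4) ^ 2))) := by
  apply summable_exp_quad (by positivity : 0 < t * π ^ 2)
    (g := fun n : ℕ => ((n : ℝ) + 3 / 4) ^ 2)
  intro n
  nlinarith [sq_nonneg ((n : ℝ) + 3 / 4), Nat.cast_nonneg (α := ℝ) n]

lemma evenKernel_eq {t : ℝ} (ht : 0 < t) :
    (∑' n : ℕ, Real.exp (-(t * π ^ 2 * ((n : ℝ) + 1 / 4) ^ 2))) +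
      (∑' n : ℕ, Real.exp (-(t * π ^ 2 * ((n : ℝ) + 3 / 4) ^ 2))) =
      HurwitzZeta.evenKernel ((1 / 4 : ℝ) : UnitAddCircle) (π * t) := by
  have hpt : 0 < π * t := by positivity
  have hZ := HurwitzZeta.hasSum_int_evenKernel (a := (1 / 4 : ℝ)) hpt
  have h1 : HasSum (fun n : ℕ => Real.exp (-π * (((n : ℤ) : ℝ) + 1 / 4) ^ 2 * (π * t)))
      (∑' n : ℕ, Real.exp (-(t * π ^ 2 * ((n : ℝ) + 1 / 4) ^ 2))) := by
    have heq : (fun n : ℕ => Real.exp (-(t * π ^ 2 * ((n : ℝ) + 1 / 4) ^ 2))) =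
        (fun n : ℕ => Real.exp (-π * (((n : ℤ) : ℝ) + 1 / 4) ^ 2 * (π * t))) := by
      funext n
      congr 1
      push_cast
      ring
    rw [← heq]
    exact (summable_G ht).hasSum
  have h2 : HasSum (fun n : ℕ => Real.exp (-π * (((-(n + 1) : ℤ) : ℝ) + 1 / 4) ^ 2 * (π * t)))
      (∑' n : ℕ, Real.exp (-(t * π ^ 2 * ((n : ℝ) + 3 / 4) ^ 2))) := by
    have heq : (fun n : ℕ => Real.exp (-(t * π ^ 2 * ((n : ℝ) + 3 / 4) ^ 2))) =
        (fun n : ℕ => Real.exp (-π * (((-(n + 1) : ℤ) : ℝ) + 1 / 4) ^ 2 * (π * t))) := by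
      funext n
      congr 1
      push_cast
      ring
    rw [← heq]
    exact (summable_Hh ht).hasSum
  exact (HasSum.of_nat_of_neg_add_one
    (f := fun n : ℤ => Real.exp (-π * ((n : ℝ) + 1 / 4) ^ 2 * (π * t))) h1 h2).unique hZ

lemma cosKernel_bound {y : ℝ} (hy : 0 < y) (hy1 : 1 ≤ π * y) :
    |HurwitzZeta.cosKernel ((1 / 4 : ℝ) : UnitAddCircle) y - 1| ≤ 4 * Real.exp (-(π * y)) := by
  have h0 := HurwitzZeta.hasSum_nat_cosKernel₀ (1 / 4 : ℝ) hy
  have hr1 : Real.exp (-(π * y)) < 1 := Real.exp_lt_one_iff.mpr (by linarith)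
  have hr0 : 0 ≤ Real.exp (-(π * y)) := (Real.exp_pos _).le
  have hgeo : HasSum (fun n : ℕ => 2 * Real.exp (-(π * y)) * Real.exp (-(π * y)) ^ n)
      (2 * Real.exp (-(π * y)) * (1 - Real.exp (-(π * y)))⁻¹) :=
    (hasSum_geometric_of_lt_one hr0 hr1).mul_left _
  have hb : ‖HurwitzZeta.cosKernel ((1 / 4 : ℝ) : UnitAddCircle) y - 1‖ ≤
      2 * Real.exp (-(π * y)) * (1 - Real.exp (-(π * y)))⁻¹ := by
    rw [← h0.tsum_eq]
    apply tsum_of_norm_bounded hgeo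
    intro n
    have hcos : |Real.cos (2 * π * (1 / 4) * ((n : ℝ) + 1))| ≤ 1 := Real.abs_cos_le_one _
    have hexp : Real.exp (-π * ((n : ℝ) + 1) ^ 2 * y) ≤
        Real.exp (-(π * y)) * Real.exp (-(π * y)) ^ n := by
      rw [← Real.exp_nat_mul, ← Real.exp_add]
      apply Real.exp_le_exp.2
      have hn : (0:ℝ) ≤ (n : ℝ) := Nat.cast_nonneg n
      nlinarith [Real.pi_pos, sq_nonneg ((n:ℝ))]
    rw [norm_mul, norm_mul]
    calc ‖(2:ℝ)‖ * ‖Real.cos (2 * π * (1 / 4) * ((n : ℝ) + 1))‖ *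
          ‖Real.exp (-π * ((n : ℝ) + 1) ^ 2 * y)‖
        ≤ 2 * 1 * (Real.exp (-(π * y)) * Real.exp (-(π * y)) ^ n) := by
          apply mul_le_mul
          · simp only [Real.norm_eq_abs, abs_two]
            exact mul_le_mul_of_nonneg_left hcos (by norm_num)
          · rw [Real.norm_eq_abs, abs_of_pos (Real.exp_pos _)]
            exact hexp
          · positivity
          · norm_num
      _ = 2 * Real.exp (-(π * y)) * Real.exp (-(π * y)) ^ n := by ring
  rw [← Real.norm_eq_abs]
  refine le_trans hb ?_
  have hinv : (1 - Real.exp (-(π * y)))⁻¹ ≤ 2 := by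
    have hhalf : Real.exp (-(π * y)) ≤ Real.exp (-1) := Real.exp_le_exp.2 (by linarith)
    have he1 : Real.exp (-1) ≤ 1 / 2 := by
      rw [Real.exp_neg]
      rw [div_eq_mul_inv, one_mul]
      apply inv_anti₀ (by norm_num)
      linarith [Real.add_one_le_exp 1]
    rw [show (2:ℝ) = (1/2 : ℝ)⁻¹ by norm_num]
    apply inv_anti₀ (by linarith) (by linarith)
  nlinarith [Real.exp_pos (-(π * y))]
lemma exp_neg_ub {x : ℝ} (hx : 0 ≤ x) : Real.exp (-x) ≤ 1 - x + x ^ 2 / 2 := by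
  have h1 := exp_quad_lb hx
  have h2 : Real.exp (-x) * Real.exp x = 1 := by rw [← Real.exp_add]; simp
  have h3 : 0 < Real.exp x := Real.exp_pos x
  have h4 : 0 < Real.exp (-x) := Real.exp_pos (-x)
  nlinarith [sq_nonneg (x ^ 2), sq_nonneg x, mul_pos h3 h4]

lemma exp_inv_small {t : ℝ} (ht : 0 < t) (ht1 : t ≤ 1) : Real.exp (-(1 / t)) ≤ 2 * t ^ 2 := by
  have hx : (0:ℝ) ≤ 1 / t := by positivity
  have h1 := exp_quad_lb hx
  have h2 : Real.exp (-(1 / t)) * Real.exp (1 / t) = 1 := by rw [← Real.exp_add]; simp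
  have h4 : 0 < Real.exp (-(1 / t)) := Real.exp_pos _
  have h5 : (1 / t) ^ 2 = 1 / t ^ 2 := by field_simp
  have h6 : Real.exp (1 / t) ≥ 1 / t ^ 2 / 2 := by
    rw [← h5]; nlinarith
  have h7 : 0 < t ^ 2 := by positivity
  have h8 : (1 / t ^ 2 / 2) * (2 * t ^ 2) = 1 := by field_simp
  nlinarith

lemma theta_bound {t : ℝ} (ht : 0 < t) (ht1 : t ≤ 1) :
    |(∑' n : ℕ, Real.exp (-(t * π ^ 2 * ((n : ℝ) + 1 / 4) ^ 2))) +
      (∑' n : ℕ, Real.exp (-(t * π ^ 2 * ((n : ℝ) + 3 / 4) ^ 2))) -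
      (1 / Real.sqrt π) * t ^ (-(1 : ℝ) / 2)| ≤ 8 * t := by
  have hπ := Real.pi_pos
  set y : ℝ := 1 / (π * t) with hydef
  have hy : 0 < y := by positivity
  have hpy : π * y = 1 / t := by rw [hydef]; field_simp
  have hy1 : 1 ≤ π * y := by
    rw [hpy]
    rw [le_div_iff₀ ht]; linarith
  have hK := cosKernel_bound hy hy1
  set K := HurwitzZeta.cosKernel ((1 / 4 : ℝ) : UnitAddCircle) y with hKdef
  have hKe : Real.exp (-(π * y)) ≤ 2 * t ^ 2 := by
    rw [hpy]; exact exp_inv_small ht ht1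
  have hK8 : |K - 1| ≤ 8 * t ^ 2 := by nlinarith
  -- functional equation
  have hFE := HurwitzZeta.evenKernel_functional_equation ((1 / 4 : ℝ) : UnitAddCircle) (π * t)
  have hinv : 1 / (π * t) = y := rfl
  rw [hinv] at hFE
  -- power identity
  have hpow : 1 / (π * t) ^ ((1:ℝ) / 2) = (1 / Real.sqrt π) * t ^ (-(1 : ℝ) / 2) := by
    rw [Real.mul_rpow Real.pi_pos.le ht.le, Real.sqrt_eq_rpow, neg_div, Real.rpow_neg ht.le]
    field_simp
  have hGH : (∑' n : ℕ, Real.exp (-(t * π ^ 2 * ((n : ℝ) + 1 / 4) ^ 2))) +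
      (∑' n : ℕ, Real.exp (-(t * π ^ 2 * ((n : ℝ) + 3 / 4) ^ 2))) =
      ((1 / Real.sqrt π) * t ^ (-(1 : ℝ) / 2)) * K := by
    rw [evenKernel_eq ht, hFE, hpow]
  rw [hGH]
  have hsq1 : 1 ≤ Real.sqrt π := by
    rw [show (1:ℝ) = Real.sqrt 1 by simp]
    exact Real.sqrt_le_sqrt (by linarith [Real.pi_gt_three])
  have hsqpos : 0 < Real.sqrt π := by linarith
  have hTpos : 0 < t ^ (-(1 : ℝ) / 2) := Real.rpow_pos_of_pos ht _
  have hcoef : 0 < (1 / Real.sqrt π) * t ^ (-(1 : ℝ) / 2) := by positivity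
  have hid : ((1 / Real.sqrt π) * t ^ (-(1 : ℝ) / 2)) * K -
      (1 / Real.sqrt π) * t ^ (-(1 : ℝ) / 2) =
      ((1 / Real.sqrt π) * t ^ (-(1 : ℝ) / 2)) * (K - 1) := by ring
  rw [hid, abs_mul, abs_of_pos hcoef]
  have hpow2 : t ^ (-(1 : ℝ) / 2) * t ^ 2 ≤ t := by
    have h1 : t ^ (-(1 : ℝ) / 2) * t ^ 2 = t ^ ((3 : ℝ) / 2) := by
      rw [← Real.rpow_natCast t 2, ← Real.rpow_add ht]
      norm_num
    rw [h1]
    calc t ^ ((3 : ℝ) / 2) ≤ t ^ ((1 : ℝ)) :=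
          Real.rpow_le_rpow_of_exponent_ge ht ht1 (by norm_num)
      _ = t := Real.rpow_one t
  have hcoef1 : (1 / Real.sqrt π) * t ^ (-(1 : ℝ) / 2) ≤ t ^ (-(1 : ℝ) / 2) := by
    have : 1 / Real.sqrt π ≤ 1 := by
      rw [div_le_one hsqpos]; exact hsq1
    nlinarith
  calc ((1 / Real.sqrt π) * t ^ (-(1 : ℝ) / 2)) * |K - 1|
      ≤ t ^ (-(1 : ℝ) / 2) * (8 * t ^ 2) := by
        apply mul_le_mul hcoef1 hK8 (abs_nonneg _) hTpos.le
    _ = 8 * (t ^ (-(1 : ℝ) / 2) * t ^ 2) := by ring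
    _ ≤ 8 * t := by linarith
lemma GH_diff {t : ℝ} (ht : 0 < t) :
    (∑' n : ℕ, Real.exp (-(t * π ^ 2 * ((n : ℝ) + 1 / 4) ^ 2))) -
      (∑' n : ℕ, Real.exp (-(t * π ^ 2 * ((n : ℝ) + 3 / 4) ^ 2))) =
      ∑' k : ℕ, (-1 : ℝ) ^ k * Real.exp (-(t * π ^ 2 / 16 * (2 * (k : ℝ) + 1) ^ 2)) := by
  have hπ := Real.pi_pos
  have hs : 0 < t * π ^ 2 / 16 := by positivity
  have hsum : Summable (fun k : ℕ =>
      Real.exp (-(t * π ^ 2 / 16 * (2 * (k : ℝ) + 1) ^ 2))) := by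
    apply summable_exp_quad hs (g := fun k : ℕ => (2 * (k : ℝ) + 1) ^ 2)
    intro n
    have := Nat.cast_nonneg (α := ℝ) n
    nlinarith [sq_nonneg ((n : ℝ))]
  have hf : Summable (fun k : ℕ =>
      (-1 : ℝ) ^ k * Real.exp (-(t * π ^ 2 / 16 * (2 * (k : ℝ) + 1) ^ 2))) := by
    apply Summable.of_norm_bounded hsum
    intro k
    rw [norm_mul, norm_pow]
    simp [abs_of_pos (Real.exp_pos _)]
  have he := hf.comp_injective (mul_right_injective₀ (two_ne_zero' ℕ))
  have ho := hf.comp_injective ((add_left_injective 1).comp (mul_right_injective₀ (two_ne_zero' ℕ)))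
  have key := tsum_even_add_odd (f := fun k : ℕ =>
      (-1 : ℝ) ^ k * Real.exp (-(t * π ^ 2 / 16 * (2 * (k : ℝ) + 1) ^ 2))) he ho
  have h1 : (∑' k : ℕ, (-1 : ℝ) ^ (2 * k) *
      Real.exp (-(t * π ^ 2 / 16 * (2 * ((2 * k : ℕ) : ℝ) + 1) ^ 2))) =
      ∑' n : ℕ, Real.exp (-(t * π ^ 2 * ((n : ℝ) + 1 / 4) ^ 2)) := by
    apply tsum_congr
    intro k
    rw [pow_mul, neg_one_sq, one_pow, one_mul]
    congr 1
    push_cast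
    ring
  have h2 : (∑' k : ℕ, (-1 : ℝ) ^ (2 * k + 1) *
      Real.exp (-(t * π ^ 2 / 16 * (2 * ((2 * k + 1 : ℕ) : ℝ) + 1) ^ 2))) =
      -∑' n : ℕ, Real.exp (-(t * π ^ 2 * ((n : ℝ) + 3 / 4) ^ 2)) := by
    rw [← tsum_neg]
    apply tsum_congr
    intro k
    have hm1 : ((-1 : ℝ)) ^ (2 * k + 1) = -1 := by
      rw [pow_succ, pow_mul, neg_one_sq, one_pow, one_mul]
    rw [hm1, neg_one_mul, neg_inj]
    congr 1
    push_cast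
    ring
  rw [← key, h1, h2]
  ring

lemma pisq16 : π ^ 2 / 16 ≤ 1 := by
  nlinarith [Real.pi_le_four, Real.pi_pos]
lemma rpow_neg_half_sq {t : ℝ} (ht : 0 < t) (ht1 : t ≤ 1) :
    t ^ (-(1 : ℝ) / 2) * t ^ 2 ≤ t := by
  have h1 : t ^ (-(1 : ℝ) / 2) * t ^ 2 = t ^ ((3 : ℝ) / 2) := by
    rw [← Real.rpow_natCast t 2, ← Real.rpow_add ht]
    norm_num
  rw [h1]
  calc t ^ ((3 : ℝ) / 2) ≤ t ^ ((1 : ℝ)) :=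
        Real.rpow_le_rpow_of_exponent_ge ht ht1 (by norm_num)
    _ = t := Real.rpow_one t

end Stmt12Aux

open Stmt12Aux Real in
set_option maxHeartbeats 2000000 in
theorem stmt12 :
    ∃ (c C : ℝ), 0 < C ∧ ∀ t ∈ Set.Ioc (0 : ℝ) 1,
      |(∑' k : ℕ, Real.exp (-t * ((((k : ℝ) + 1) - 1 / 4) ^ 2 * Real.pi ^ 2 + 1 / 4))) -
        ((1 / (2 * Real.sqrt Real.pi)) * t ^ (-(1 : ℝ) / 2) + c -
          (1 / (8 * Real.sqrt Real.pi)) * t ^ ((1 : ℝ) / 2))| ≤ C * t := by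
  refine ⟨-(1 / 4 : ℝ), 2000000, by norm_num, ?_⟩
  rintro t ⟨ht, ht1⟩
  have hπ := Real.pi_pos
  have habs_sub : ∀ x y : ℝ, |x - y| ≤ |x| + |y| := fun x y => by
    rw [sub_eq_add_neg]
    exact (abs_add_le x (-y)).trans (by rw [abs_neg])
  -- rewrite the target sum
  have hT : (∑' k : ℕ, Real.exp (-t * ((((k : ℝ) + 1) - 1 / 4) ^ 2 * π ^ 2 + 1 / 4))) =
      Real.exp (-(t / 4)) * ∑' n : ℕ, Real.exp (-(t * π ^ 2 * ((n : ℝ) + 3 / 4) ^ 2)) := by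
    rw [← tsum_mul_left]
    apply tsum_congr
    intro k
    rw [← Real.exp_add]
    congr 1
    ring
  rw [hT]
  -- main estimates
  have hth := theta_bound ht ht1
  have hs : 0 < t * π ^ 2 / 16 := by positivity
  have hs1 : t * π ^ 2 / 16 ≤ 1 := by nlinarith [pisq16, sq_nonneg π]
  have hFb := Fbound hs hs1
  rw [← GH_diff ht] at hFb
  have hFb' : |(∑' n : ℕ, Real.exp (-(t * π ^ 2 * ((n : ℝ) + 1 / 4) ^ 2))) -
      (∑' n : ℕ, Real.exp (-(t * π ^ 2 * ((n : ℝ) + 3 / 4) ^ 2))) - 1 / 2| ≤ 1000000 * t := by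
    refine le_trans hFb ?_
    nlinarith [pisq16, sq_nonneg π]
  -- abbreviations (fold into all hypotheses)
  set G := ∑' n : ℕ, Real.exp (-(t * π ^ 2 * ((n : ℝ) + 1 / 4) ^ 2)) with hGdef
  set Hh := ∑' n : ℕ, Real.exp (-(t * π ^ 2 * ((n : ℝ) + 3 / 4) ^ 2)) with hHdef
  set P := Real.sqrt π with hPdef
  set Tm := t ^ (-(1 : ℝ) / 2) with hTmdef
  set Tp := t ^ ((1 : ℝ) / 2) with hTpdef
  have hP1 : 1 ≤ P := by
    rw [hPdef, show (1:ℝ) = Real.sqrt 1 by simp]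
    exact Real.sqrt_le_sqrt (by linarith [Real.pi_gt_three])
  have hPpos : 0 < P := by linarith
  have hTmpos : 0 < Tm := Real.rpow_pos_of_pos ht _
  set A := 1 / (2 * P) * Tm with hAdef
  have hA0 : 0 ≤ A := by
    rw [hAdef]; positivity
  set d := Hh - (A - 1 / 4) with hddef
  -- bound on d
  have hd : |d| ≤ 500004 * t := by
    have hid : d = ((G + Hh - 1 / P * Tm) - (G - Hh - 1 / 2)) / 2 := by
      rw [hddef, hAdef]
      field_simp
      ring
    rw [hid, abs_div, show |(2:ℝ)| = 2 by norm_num]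
    have htri := (habs_sub (G + Hh - 1 / P * Tm) (G - Hh - 1 / 2))
    have h8 : |G + Hh - 1 / P * Tm| ≤ 8 * t := hth
    linarith [hFb']
  -- exponential estimates
  have hex1 : |Real.exp (-(t / 4)) - 1 + t / 4| ≤ t ^ 2 / 32 := by
    have h1 := Real.add_one_le_exp (-(t / 4))
    have h2 := exp_neg_ub (x := t / 4) (by linarith)
    rw [abs_le]
    constructor <;> nlinarith
  have hex0 : Real.exp (-(t / 4)) ≤ 1 := Real.exp_le_one_iff.mpr (by linarith)
  have hexpos : 0 < Real.exp (-(t / 4)) := Real.exp_pos _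
  -- power identities
  have htTm : t * Tm = Tp := by
    rw [hTmdef, hTpdef]
    nth_rewrite 1 [← Real.rpow_one t]
    rw [← Real.rpow_add ht]
    norm_num
  have hA2 : t ^ 2 * A ≤ t := by
    have h1 : Tm * t ^ 2 ≤ t := by
      have := rpow_neg_half_sq ht ht1
      rw [← hTmdef] at this
      linarith
    rw [hAdef]
    have hc : 1 / (2 * P) ≤ 1 := by
      rw [div_le_one (by linarith)]
      linarith
    have hc0 : 0 < 1 / (2 * P) := by positivity
    calc t ^ 2 * (1 / (2 * P) * Tm) = 1 / (2 * P) * (Tm * t ^ 2) := by ring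
      _ ≤ 1 * t := by
          apply mul_le_mul hc h1 (by positivity) (by norm_num)
      _ = t := one_mul t
  -- the key algebraic identity
  have hxA : 1 / (8 * P) * Tp = t / 4 * A := by
    rw [hAdef, ← htTm]
    field_simp
    ring
  have hiden : Real.exp (-(t / 4)) * Hh - (A + -(1 / 4) - 1 / (8 * P) * Tp) =
      (Real.exp (-(t / 4)) - 1 + t / 4) * (A - 1 / 4) + t / 4 * (1 / 4) +
        Real.exp (-(t / 4)) * d := by
    rw [hxA, hddef]
    ring
  rw [hiden]
  -- final triangle inequality
  have htri1 := abs_add_le ((Real.exp (-(t / 4)) - 1 + t / 4) * (A - 1 / 4) + t / 4 * (1 / 4))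
    (Real.exp (-(t / 4)) * d)
  have htri2 := abs_add_le ((Real.exp (-(t / 4)) - 1 + t / 4) * (A - 1 / 4)) (t / 4 * (1 / 4))
  have hb1 : |(Real.exp (-(t / 4)) - 1 + t / 4) * (A - 1 / 4)| ≤ t ^ 2 / 32 * (A + 1 / 4) := by
    rw [abs_mul]
    apply mul_le_mul hex1 ?_ (abs_nonneg _) (by positivity)
    rw [abs_le]
    constructor <;> linarith
  have hb2 : |t / 4 * (1 / 4)| = t / 16 := by
    rw [abs_of_pos (by linarith)]
    ring
  have hb3 : |Real.exp (-(t / 4)) * d| ≤ |d| := by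
    rw [abs_mul, abs_of_pos hexpos]
    nlinarith [abs_nonneg d]
  have ht2 : t ^ 2 ≤ t := by nlinarith
  have hfin : t ^ 2 / 32 * (A + 1 / 4) ≤ t / 32 + t / 128 := by
    have : t ^ 2 / 32 * (A + 1 / 4) = t ^ 2 * A / 32 + t ^ 2 / 128 := by ring
    rw [this]
    linarith
  linarith [hd, htri1, htri2, hb1, hb2, hb3, hfin]
end

section
/- Let (a_k)_{k ≥ 1} be a sequence of real numbers and C > 0 a constant such that |a_k − ((k − 1/4)²π² + 1/4)| ≤ C·k^{-2} for all k ≥ 1, and define H(t) = ∑_{k=1}^∞ e^{−t·a_k} for t > 0. Then there exist a real constant c and a constant C′ > 0 such that for all t ∈ (0, 1], |H(t) − ((1/(2√π))·t^{-1/2} + c − (1/(8√π))·t^{1/2})| ≤ C′·t. -/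
open Real Set Filter intervalIntegral Topology

noncomputable section ST13
namespace ST13

def gg (s x : ℝ) : ℝ := Real.exp (-(s * x ^ 2))
def g1 (s x : ℝ) : ℝ := -(2 * s * x) * Real.exp (-(s * x ^ 2))
def g2 (s x : ℝ) : ℝ := (4 * s ^ 2 * x ^ 2 - 2 * s) * Real.exp (-(s * x ^ 2))
def g3 (s x : ℝ) : ℝ := (12 * s ^ 2 * x - 8 * s ^ 3 * x ^ 3) * Real.exp (-(s * x ^ 2))

lemma hd_inner (s x : ℝ) : HasDerivAt (fun y : ℝ => -(s * y ^ 2)) (-(2 * s * x)) x := by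
  simpa [mul_comm, mul_assoc, mul_left_comm] using ((hasDerivAt_pow 2 x).const_mul s).fun_neg

lemma hd_gg (s x : ℝ) : HasDerivAt (gg s) (g1 s x) x := by
  unfold gg; simpa [g1, mul_comm] using (hd_inner s x).exp

lemma hd_g1 (s x : ℝ) : HasDerivAt (g1 s) (g2 s x) x := by
  have h1 : HasDerivAt (fun y : ℝ => -(2 * s * y)) (-(2 * s)) x := by
    simpa using ((hasDerivAt_id x).const_mul (2 * s)).fun_neg
  have := h1.fun_mul ((hd_inner s x).exp)
  refine this.congr_deriv ?_
  simp only [g2, g1]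
  ring

lemma hd_g2 (s x : ℝ) : HasDerivAt (g2 s) (g3 s x) x := by
  have h1 : HasDerivAt (fun y : ℝ => 4 * s ^ 2 * y ^ 2 - 2 * s) (4 * s ^ 2 * (2 * x)) x := by
    simpa using (((hasDerivAt_pow 2 x).const_mul (4 * s ^ 2)).sub_const (2 * s))
  have := h1.fun_mul ((hd_inner s x).exp)
  refine this.congr_deriv ?_
  simp only [g3]
  ring

lemma cont_gg (s : ℝ) : Continuous (gg s) := by unfold gg; fun_prop
lemma cont_g1 (s : ℝ) : Continuous (g1 s) := by unfold g1; fun_prop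
lemma cont_g2 (s : ℝ) : Continuous (g2 s) := by unfold g2; fun_prop
lemma cont_g3 (s : ℝ) : Continuous (g3 s) := by unfold g3; fun_prop

def FF (s x : ℝ) : ℝ := gg s (x + 1/4) - gg s (x + 3/4)
def FF1 (s x : ℝ) : ℝ := g1 s (x + 1/4) - g1 s (x + 3/4)
def FF2 (s x : ℝ) : ℝ := g2 s (x + 1/4) - g2 s (x + 3/4)

lemma hd_FF (s x : ℝ) : HasDerivAt (FF s) (FF1 s x) x := by
  have h1 : HasDerivAt (fun y : ℝ => gg s (y + 1/4)) (g1 s (x + 1/4)) x := by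
    simpa [Function.comp_def] using (hd_gg s (x + 1/4)).comp x ((hasDerivAt_id x).add_const (1/4 : ℝ))
  have h2 : HasDerivAt (fun y : ℝ => gg s (y + 3/4)) (g1 s (x + 3/4)) x := by
    simpa [Function.comp_def] using (hd_gg s (x + 3/4)).comp x ((hasDerivAt_id x).add_const (3/4 : ℝ))
  exact h1.sub h2

lemma hd_FF1 (s x : ℝ) : HasDerivAt (FF1 s) (FF2 s x) x := by
  have h1 : HasDerivAt (fun y : ℝ => g1 s (y + 1/4)) (g2 s (x + 1/4)) x := by
    simpa [Function.comp_def] using (hd_g1 s (x + 1/4)).comp x ((hasDerivAt_id x).add_const (1/4 : ℝ))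
  have h2 : HasDerivAt (fun y : ℝ => g1 s (y + 3/4)) (g2 s (x + 3/4)) x := by
    simpa [Function.comp_def] using (hd_g1 s (x + 3/4)).comp x ((hasDerivAt_id x).add_const (3/4 : ℝ))
  exact h1.sub h2

lemma cont_FF (s : ℝ) : Continuous (FF s) := by
  exact ((cont_gg s).comp (by fun_prop)).sub ((cont_gg s).comp (by fun_prop))
lemma cont_FF1 (s : ℝ) : Continuous (FF1 s) := by
  exact ((cont_g1 s).comp (by fun_prop)).sub ((cont_g1 s).comp (by fun_prop))
lemma cont_FF2 (s : ℝ) : Continuous (FF2 s) := by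
  exact ((cont_g2 s).comp (by fun_prop)).sub ((cont_g2 s).comp (by fun_prop))

/-- per-interval Euler-Maclaurin / trapezoid identity -/
lemma key_interval (s a : ℝ) :
    ∫ x in a..(a+1), FF s x
      = (FF s a + FF s (a+1))/2
        - (1/2) * ∫ x in a..(a+1), ((x - a) * (a + 1 - x)) * FF2 s x := by
  have hu : ∀ x ∈ uIcc a (a+1), HasDerivAt (fun y => (y - a) * (a + 1 - y)) (2*a + 1 - 2*x) x := by
    intro x _
    have : HasDerivAt (fun y : ℝ => (y - a) * (a + 1 - y)) ((1) * (a+1-x) + (x - a) * (-1)) x := by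
      exact (((hasDerivAt_id x).sub_const a)).mul (((hasDerivAt_id x).neg).const_add (a+1))
    convert this using 1; ring
  have hv : ∀ x ∈ uIcc a (a+1), HasDerivAt (fun y : ℝ => 2*a + 1 - 2*y) (-2) x := by
    intro x _
    simpa [sub_eq_add_neg] using (((hasDerivAt_id x).const_mul (2:ℝ)).fun_neg).const_add (2*a+1)
  have ibp1 : ∫ x in a..(a+1), ((x - a) * (a + 1 - x)) * FF2 s x
      = - ∫ x in a..(a+1), (2*a + 1 - 2*x) * FF1 s x := by
    have := integral_mul_deriv_eq_deriv_mul hu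
      (fun x _ => hd_FF1 s x)
      (by apply Continuous.intervalIntegrable; fun_prop)
      ((cont_FF2 s).intervalIntegrable _ _)
    simp only [sub_self, zero_mul, mul_zero] at this
    rw [this]; ring_nf
  have ibp2 : ∫ x in a..(a+1), (2*a + 1 - 2*x) * FF1 s x
      = - FF s (a+1) - FF s a + 2 * ∫ x in a..(a+1), FF s x := by
    have := integral_mul_deriv_eq_deriv_mul hv
      (fun x _ => hd_FF s x)
      (by apply Continuous.intervalIntegrable; fun_prop)
      ((cont_FF1 s).intervalIntegrable _ _)
    rw [this]
    rw [intervalIntegral.integral_const_mul]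
    ring_nf
  rw [ibp1, ibp2]; ring

lemma one_sub_exp_le {u : ℝ} : 1 - Real.exp (-u) ≤ u := by
  nlinarith [Real.add_one_le_exp (-u)]

lemma exp_antitone_bound {a b : ℝ} (h0 : 0 ≤ a) (hab : a ≤ b) :
    |Real.exp (-a) - Real.exp (-b)| ≤ b - a := by
  have h1 : Real.exp (-b) ≤ Real.exp (-a) := Real.exp_le_exp.mpr (by linarith)
  rw [abs_of_nonneg (by linarith)]
  have hmul : Real.exp (-b) = Real.exp (-a) * Real.exp (a - b) := by
    rw [← Real.exp_add]; ring_nf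
  have h2 : Real.exp (-a) ≤ 1 := Real.exp_le_one_iff.mpr (by linarith)
  nlinarith [Real.add_one_le_exp (a - b), Real.exp_pos (-a)]

lemma summable_gauss {s : ℝ} (hs : 0 < s) {b : ℝ} (hb : 0 ≤ b) :
    Summable (fun k : ℕ => Real.exp (-(s * ((k : ℝ) + b) ^ 2))) := by
  refine Summable.of_nonneg_of_le (fun k => (Real.exp_pos _).le) (fun k => ?_)
    (summable_geometric_of_lt_one (Real.exp_pos (-s)).le
      (Real.exp_lt_one_iff.mpr (by linarith)))
  · rw [← Real.exp_nat_mul]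
    apply Real.exp_le_exp.mpr
    have hk : (k : ℝ) ≤ ((k : ℝ) + b) ^ 2 ∨ k = 0 := by
      rcases Nat.eq_zero_or_pos k with h | h
      · right; exact h
      · left
        have h1 : (1 : ℝ) ≤ (k : ℝ) := by exact_mod_cast h
        nlinarith
    rcases hk with h | h
    · nlinarith
    · subst h; simp; positivity

-- FTC integral bounds
lemma int_Ia {s : ℝ} (hs : 0 < s) (N : ℝ) :
    ∫ x in (0:ℝ)..N, x * Real.exp (-(s * x ^ 2)) ≤ 1 / (2 * s) := by
  have hder : ∀ x ∈ uIcc (0:ℝ) N,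
      HasDerivAt (fun y => -(gg s y / (2 * s))) (x * Real.exp (-(s * x ^ 2))) x := by
    intro x _
    have := ((hd_gg s x).div_const (2 * s)).fun_neg
    refine this.congr_deriv ?_
    simp only [g1]
    field_simp
  have := integral_eq_sub_of_hasDerivAt hder
    (by apply Continuous.intervalIntegrable; fun_prop)
  rw [this]
  have h1 : gg s N ≥ 0 := (Real.exp_pos _).le
  have h0 : gg s 0 = 1 := by simp [gg]
  rw [h0]
  have h2 : 0 ≤ gg s N / (2 * s) := div_nonneg h1 (by linarith)
  linarith

lemma int_Ib {s : ℝ} (hs : 0 < s) (N : ℝ) :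
    ∫ x in (0:ℝ)..N, x ^ 3 * Real.exp (-(s * x ^ 2)) ≤ 1 / (2 * s ^ 2) := by
  have hder : ∀ x ∈ uIcc (0:ℝ) N,
      HasDerivAt (fun y => -((s * y ^ 2 + 1) * gg s y / (2 * s ^ 2)))
        (x ^ 3 * Real.exp (-(s * x ^ 2))) x := by
    intro x _
    have hq : HasDerivAt (fun y : ℝ => s * y ^ 2 + 1) (s * (2 * x)) x := by
      simpa using ((hasDerivAt_pow 2 x).const_mul s).add_const 1
    have := ((hq.fun_mul (hd_gg s x)).div_const (2 * s ^ 2)).fun_neg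
    refine this.congr_deriv ?_
    simp only [g1, gg]
    field_simp
    ring
  have := integral_eq_sub_of_hasDerivAt hder
    (by apply Continuous.intervalIntegrable; fun_prop)
  rw [this]
  have h1 : 0 ≤ (s * N ^ 2 + 1) * gg s N / (2 * s ^ 2) := by
    have : (0:ℝ) ≤ gg s N := (Real.exp_pos _).le
    positivity
  have h0 : gg s 0 = 1 := by simp [gg]
  rw [h0]
  norm_num
  linarith

lemma int_Ic {s : ℝ} (hs : 0 < s) (N : ℝ) :
    ∫ x in (0:ℝ)..N, Real.exp (-(s * x)) ≤ 1 / s := by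
  have hder : ∀ x ∈ uIcc (0:ℝ) N,
      HasDerivAt (fun y => -(Real.exp (-(s * y)) / s)) (Real.exp (-(s * x))) x := by
    intro x _
    have hl : HasDerivAt (fun y : ℝ => -(s * y)) (-s) x := by
      simpa using ((hasDerivAt_id x).const_mul s).fun_neg
    have := (hl.exp.div_const s).fun_neg
    refine this.congr_deriv ?_
    field_simp
  have := integral_eq_sub_of_hasDerivAt hder
    (by apply Continuous.intervalIntegrable; fun_prop)
  rw [this]
  simp only [mul_zero, neg_zero, Real.exp_zero]
  have : 0 ≤ Real.exp (-(s * N)) / s := by positivity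
  linarith
def bnd (s x : ℝ) : ℝ :=
  (12 * s ^ 2 * (x + 3/4) + 8 * s ^ 3 * (x + 3/4) ^ 3) * Real.exp (-(s * (x + 1/4) ^ 2))

lemma FF2_ptwise {s : ℝ} (hs : 0 < s) {x : ℝ} (hx : 0 ≤ x) :
    |FF2 s x| ≤ (1/2) * bnd s x := by
  set A := x + 1/4 with hA
  set B := x + 3/4 with hB
  have hAB : A ≤ B := by simp [hA, hB]; linarith
  have hA0 : 0 < A := by simp [hA]; linarith
  have hftc : ∫ y in A..B, g3 s y = g2 s B - g2 s A :=
    integral_eq_sub_of_hasDerivAt (fun y _ => hd_g2 s y)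
      ((cont_g3 s).intervalIntegrable _ _)
  have hnorm : ‖∫ y in A..B, g3 s y‖ ≤ ((12 * s ^ 2 * B + 8 * s ^ 3 * B ^ 3)
      * Real.exp (-(s * A ^ 2))) * |B - A| := by
    apply intervalIntegral.norm_integral_le_of_norm_le_const
    intro y hy
    rw [Set.uIoc_of_le hAB] at hy
    obtain ⟨hy1, hy2⟩ := hy
    have hy0 : 0 < y := lt_of_le_of_lt hA0.le hy1
    have hpoly : |12 * s ^ 2 * y - 8 * s ^ 3 * y ^ 3| ≤ 12 * s ^ 2 * B + 8 * s ^ 3 * B ^ 3 := by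
      have := abs_sub (12 * s ^ 2 * y) (8 * s ^ 3 * y ^ 3)
      have h1 : |12 * s ^ 2 * y| = 12 * s ^ 2 * y := abs_of_nonneg (by positivity)
      have h2 : |8 * s ^ 3 * y ^ 3| = 8 * s ^ 3 * y ^ 3 := abs_of_nonneg (by positivity)
      have h3 : y ^ 3 ≤ B ^ 3 := pow_le_pow_left₀ hy0.le hy2 3
      rw [h1, h2] at this
      have m1 : 12 * s ^ 2 * y ≤ 12 * s ^ 2 * B :=
        mul_le_mul_of_nonneg_left hy2 (by positivity)
      have m2 : 8 * s ^ 3 * y ^ 3 ≤ 8 * s ^ 3 * B ^ 3 :=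
        mul_le_mul_of_nonneg_left h3 (by positivity)
      linarith
    have hexp : Real.exp (-(s * y ^ 2)) ≤ Real.exp (-(s * A ^ 2)) := by
      apply Real.exp_le_exp.mpr
      have hA2 : A ^ 2 ≤ y ^ 2 := pow_le_pow_left₀ hA0.le hy1.le 2
      nlinarith [mul_le_mul_of_nonneg_left hA2 hs.le]
    rw [g3, Real.norm_eq_abs, abs_mul, abs_of_pos (Real.exp_pos _)]
    exact mul_le_mul hpoly hexp (Real.exp_pos _).le (by positivity)
  rw [hftc] at hnorm
  have hBA : |B - A| = 1/2 := by rw [hA, hB]; norm_num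
  rw [hBA] at hnorm
  have : |FF2 s x| = ‖g2 s B - g2 s A‖ := by rw [FF2, Real.norm_eq_abs, abs_sub_comm]
  rw [this]
  rw [bnd]
  calc ‖g2 s B - g2 s A‖ ≤ _ := hnorm
  _ = (1/2) * ((12 * s ^ 2 * B + 8 * s ^ 3 * B ^ 3) * Real.exp (-(s * A ^ 2))) := by ring

lemma bnd_ptwise {s : ℝ} (hs : 0 < s) (hs2 : s ≤ Real.pi ^ 2) {x : ℝ} (hx : 0 ≤ x) :
    bnd s x ≤ 12 * s ^ 2 * (x * Real.exp (-(s * x ^ 2)))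
      + 32 * s ^ 3 * (x ^ 3 * Real.exp (-(s * x ^ 2)))
      + (9 * s ^ 2 + 14 * s ^ 3) * (Real.exp (Real.pi ^ 2 / 4) * Real.exp (-(s * x))) := by
  have e1 : Real.exp (-(s * (x + 1/4) ^ 2)) ≤ Real.exp (-(s * x ^ 2)) :=
    Real.exp_le_exp.mpr (by nlinarith)
  have e2 : Real.exp (-(s * x ^ 2)) ≤ Real.exp (Real.pi ^ 2 / 4) * Real.exp (-(s * x)) := by
    rw [← Real.exp_add]
    apply Real.exp_le_exp.mpr
    nlinarith [sq_nonneg (x - 1/2)]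
  have hpoly : 12 * s ^ 2 * (x + 3/4) + 8 * s ^ 3 * (x + 3/4) ^ 3
      ≤ 12 * s ^ 2 * x + 9 * s ^ 2 + 32 * s ^ 3 * x ^ 3 + 14 * s ^ 3 := by
    nlinarith [mul_nonneg hx (sq_nonneg (x - 3/4)), sq_nonneg (x - 3/4), pow_pos hs 3]
  have hb1 : bnd s x ≤ (12 * s ^ 2 * x + 9 * s ^ 2 + 32 * s ^ 3 * x ^ 3 + 14 * s ^ 3)
      * Real.exp (-(s * x ^ 2)) := by
    rw [bnd]
    have hbpos : (0:ℝ) ≤ 12 * s ^ 2 * x + 9 * s ^ 2 + 32 * s ^ 3 * x ^ 3 + 14 * s ^ 3 := by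
      have := mul_nonneg (sq_nonneg s) hx
      have := mul_nonneg (pow_nonneg hs.le 3) (pow_nonneg hx 3)
      nlinarith [sq_nonneg s, pow_nonneg hs.le 3]
    exact mul_le_mul hpoly e1 (Real.exp_pos _).le hbpos
  have hb2 : (9 * s ^ 2 + 14 * s ^ 3) * Real.exp (-(s * x ^ 2))
      ≤ (9 * s ^ 2 + 14 * s ^ 3) * (Real.exp (Real.pi ^ 2 / 4) * Real.exp (-(s * x))) :=
    mul_le_mul_of_nonneg_left e2 (by positivity)
  nlinarith [Real.exp_pos (-(s * x ^ 2)), mul_pos hs hs, hb1, hb2]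

lemma int_FF2 {s : ℝ} (hs : 0 < s) (hs2 : s ≤ Real.pi ^ 2) (N : ℝ) (hN : 0 ≤ N) :
    ∫ x in (0:ℝ)..N, |FF2 s x| ≤ (22 + Real.exp (Real.pi ^ 2 / 4) * (9 + 14 * Real.pi ^ 2)) * s := by
  have step1 : ∫ x in (0:ℝ)..N, |FF2 s x| ≤ ∫ x in (0:ℝ)..N, (1/2) * bnd s x := by
    apply intervalIntegral.integral_mono_on hN
    · exact ((cont_FF2 s).abs).intervalIntegrable _ _
    · apply Continuous.intervalIntegrable
      unfold bnd; fun_prop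
    · intro x hx
      exact FF2_ptwise hs hx.1
  have step2 : ∫ x in (0:ℝ)..N, (1/2) * bnd s x
      ≤ ∫ x in (0:ℝ)..N, (1/2) * (12 * s ^ 2 * (x * Real.exp (-(s * x ^ 2)))
        + 32 * s ^ 3 * (x ^ 3 * Real.exp (-(s * x ^ 2)))
        + (9 * s ^ 2 + 14 * s ^ 3) * (Real.exp (Real.pi ^ 2 / 4) * Real.exp (-(s * x)))) := by
    apply intervalIntegral.integral_mono_on hN
    · apply Continuous.intervalIntegrable; unfold bnd; fun_prop
    · apply Continuous.intervalIntegrable; fun_prop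
    · intro x hx
      have := bnd_ptwise hs hs2 hx.1
      linarith
  have hint1 : IntervalIntegrable (fun x => x * Real.exp (-(s * x ^ 2))) MeasureTheory.volume 0 N := by
    apply Continuous.intervalIntegrable; fun_prop
  have hint3 : IntervalIntegrable (fun x => x ^ 3 * Real.exp (-(s * x ^ 2))) MeasureTheory.volume 0 N := by
    apply Continuous.intervalIntegrable; fun_prop
  have hint0 : IntervalIntegrable (fun x => Real.exp (-(s * x))) MeasureTheory.volume 0 N := by
    apply Continuous.intervalIntegrable; fun_prop
  have split : ∫ x in (0:ℝ)..N, (1/2) * (12 * s ^ 2 * (x * Real.exp (-(s * x ^ 2)))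
        + 32 * s ^ 3 * (x ^ 3 * Real.exp (-(s * x ^ 2)))
        + (9 * s ^ 2 + 14 * s ^ 3) * (Real.exp (Real.pi ^ 2 / 4) * Real.exp (-(s * x))))
      = (6 * s ^ 2) * (∫ x in (0:ℝ)..N, x * Real.exp (-(s * x ^ 2)))
        + (16 * s ^ 3) * (∫ x in (0:ℝ)..N, x ^ 3 * Real.exp (-(s * x ^ 2)))
        + ((9 * s ^ 2 + 14 * s ^ 3) * Real.exp (Real.pi ^ 2 / 4) / 2)
          * (∫ x in (0:ℝ)..N, Real.exp (-(s * x))) := by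
    rw [← intervalIntegral.integral_const_mul, ← intervalIntegral.integral_const_mul,
      ← intervalIntegral.integral_const_mul, ← intervalIntegral.integral_add, ← intervalIntegral.integral_add]
    · congr 1; ext x; ring
    · exact (hint1.const_mul _).add (hint3.const_mul _)
    · exact hint0.const_mul _
    · exact hint1.const_mul _
    · exact hint3.const_mul _
  have b1 := int_Ia hs N
  have b3 := int_Ib hs N
  have b0 := int_Ic hs N
  have hc1 : (6 * s ^ 2) * (∫ x in (0:ℝ)..N, x * Real.exp (-(s * x ^ 2))) ≤ 3 * s := by
    have := mul_le_mul_of_nonneg_left b1 (by positivity : (0:ℝ) ≤ 6 * s ^ 2)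
    calc (6 * s ^ 2) * _ ≤ (6 * s ^ 2) * (1 / (2 * s)) := this
    _ = 3 * s := by field_simp; ring
  have hc3 : (16 * s ^ 3) * (∫ x in (0:ℝ)..N, x ^ 3 * Real.exp (-(s * x ^ 2))) ≤ 8 * s := by
    have := mul_le_mul_of_nonneg_left b3 (by positivity : (0:ℝ) ≤ 16 * s ^ 3)
    calc (16 * s ^ 3) * _ ≤ (16 * s ^ 3) * (1 / (2 * s ^ 2)) := this
    _ = 8 * s := by field_simp; ring
  have hc0 : ((9 * s ^ 2 + 14 * s ^ 3) * Real.exp (Real.pi ^ 2 / 4) / 2)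
      * (∫ x in (0:ℝ)..N, Real.exp (-(s * x)))
      ≤ Real.exp (Real.pi ^ 2 / 4) * (9 + 14 * Real.pi ^ 2) * s / 2 := by
    have hcpos : (0:ℝ) ≤ (9 * s ^ 2 + 14 * s ^ 3) * Real.exp (Real.pi ^ 2 / 4) / 2 := by positivity
    have := mul_le_mul_of_nonneg_left b0 hcpos
    calc ((9 * s ^ 2 + 14 * s ^ 3) * Real.exp (Real.pi ^ 2 / 4) / 2) * _
        ≤ ((9 * s ^ 2 + 14 * s ^ 3) * Real.exp (Real.pi ^ 2 / 4) / 2) * (1 / s) := this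
    _ = (9 * s + 14 * s ^ 2) * Real.exp (Real.pi ^ 2 / 4) / 2 := by field_simp
    _ ≤ Real.exp (Real.pi ^ 2 / 4) * (9 + 14 * Real.pi ^ 2) * s / 2 := by
        have h14 : 14 * s ^ 2 ≤ 14 * Real.pi ^ 2 * s := by nlinarith
        nlinarith [Real.exp_pos (Real.pi ^ 2 / 4)]
  have hexp9 : 0 ≤ Real.exp (Real.pi ^ 2 / 4) * (9 + 14 * Real.pi ^ 2) * s / 2 := by positivity
  calc ∫ x in (0:ℝ)..N, |FF2 s x| ≤ _ := step1
  _ ≤ _ := step2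
  _ = _ := split
  _ ≤ 3 * s + 8 * s + Real.exp (Real.pi ^ 2 / 4) * (9 + 14 * Real.pi ^ 2) * s / 2 := by
      linarith
  _ ≤ (22 + Real.exp (Real.pi ^ 2 / 4) * (9 + 14 * Real.pi ^ 2)) * s := by
      nlinarith [Real.exp_pos (Real.pi ^ 2 / 4), Real.pi_pos]
notation "KK" => (22 + Real.exp (Real.pi ^ 2 / 4) * (9 + 14 * Real.pi ^ 2) : ℝ)

set_option maxHeartbeats 2000000 in
lemma step2b {s : ℝ} (hs : 0 < s) (hs2 : s ≤ Real.pi ^ 2) :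
    |(∑' k : ℕ, FF s (k : ℝ)) - 1/2| ≤ (KK + 1) * s := by
  have h14 := summable_gauss hs (b := 1/4) (by norm_num)
  have h34 := summable_gauss hs (b := 3/4) (by norm_num)
  have hsumF : Summable (fun k : ℕ => FF s (k : ℝ)) := by
    simpa [FF, gg] using h14.sub h34
  -- main per-N inequality
  have main : ∀ N : ℕ, |(∑ m ∈ Finset.range N, FF s (m : ℝ)) - 1/2|
      ≤ KK * s / 8 + 9 * s / 32 + s / 4 + Real.exp (-(s * (N:ℝ))) / 2 + |FF s (N:ℝ)| / 2 := by
    intro N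
    have hN0 : (0:ℝ) ≤ (N:ℝ) := Nat.cast_nonneg N
    -- adjacent intervals for FF
    have adjF : ∑ m ∈ Finset.range N, ∫ x in ((m:ℕ):ℝ)..(((m:ℕ):ℝ)+1), FF s x
        = ∫ x in (0:ℝ)..(N:ℝ), FF s x := by
      have := intervalIntegral.sum_integral_adjacent_intervals (μ := MeasureTheory.volume)
        (a := fun k : ℕ => (k : ℝ)) (n := N) (f := FF s)
        (fun k _ => (cont_FF s).intervalIntegrable _ _)
      simp only [Nat.cast_zero] at this
      rw [← this]
      apply Finset.sum_congr rfl
      intro m _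
      norm_num [Nat.cast_succ]
    have adjF2 : ∑ m ∈ Finset.range N, ∫ x in ((m:ℕ):ℝ)..(((m:ℕ):ℝ)+1), |FF2 s x|
        = ∫ x in (0:ℝ)..(N:ℝ), |FF2 s x| := by
      have := intervalIntegral.sum_integral_adjacent_intervals (μ := MeasureTheory.volume)
        (a := fun k : ℕ => (k : ℝ)) (n := N) (f := fun x => |FF2 s x|)
        (fun k _ => ((cont_FF2 s).abs).intervalIntegrable _ _)
      simp only [Nat.cast_zero] at this
      rw [← this]
      apply Finset.sum_congr rfl
      intro m _
      norm_num [Nat.cast_succ]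
    -- telescoping
    have tele : ∑ m ∈ Finset.range N, (FF s ((m:ℝ)+1) - FF s (m:ℝ))
        = FF s (N:ℝ) - FF s (0:ℝ) := by
      have h0 := Finset.sum_range_sub (f := fun m : ℕ => FF s (m : ℝ)) N
      rw [Nat.cast_zero] at h0
      rw [← h0]
      apply Finset.sum_congr rfl
      intro m _
      norm_num [Nat.cast_succ]
    -- error terms
    set Em : ℕ → ℝ := fun m => ∫ x in ((m:ℕ):ℝ)..(((m:ℕ):ℝ)+1),
      ((x - (m:ℝ)) * ((m:ℝ) + 1 - x)) * FF2 s x with hEm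
    have sum_eq : ∫ x in (0:ℝ)..(N:ℝ), FF s x
        = (∑ m ∈ Finset.range N, FF s (m:ℝ)) + (FF s (N:ℝ) - FF s (0:ℝ))/2
          - (1/2) * ∑ m ∈ Finset.range N, Em m := by
      rw [← adjF]
      have : ∀ m : ℕ, ∫ x in ((m:ℕ):ℝ)..(((m:ℕ):ℝ)+1), FF s x
          = (FF s (m:ℝ) + FF s ((m:ℝ)+1))/2 - (1/2) * Em m := fun m => key_interval s (m:ℝ)
      rw [Finset.sum_congr rfl (fun m _ => this m)]
      rw [Finset.sum_sub_distrib, ← Finset.mul_sum]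
      have expand : ∑ m ∈ Finset.range N, (FF s (m:ℝ) + FF s ((m:ℝ)+1))/2
          = (∑ m ∈ Finset.range N, FF s (m:ℝ)) + (FF s (N:ℝ) - FF s (0:ℝ))/2 := by
        have : ∀ m : ℕ, (FF s (m:ℝ) + FF s ((m:ℝ)+1))/2
            = FF s (m:ℝ) + (FF s ((m:ℝ)+1) - FF s (m:ℝ))/2 := by intro m; ring
        rw [Finset.sum_congr rfl (fun m _ => this m), Finset.sum_add_distrib,
          ← Finset.sum_div, tele]
      rw [expand]
    -- bound on error sum
    have Em_bound : |∑ m ∈ Finset.range N, Em m| ≤ KK * s / 4 := by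
      have each : ∀ m : ℕ, |Em m| ≤ (1/4) * ∫ x in ((m:ℕ):ℝ)..(((m:ℕ):ℝ)+1), |FF2 s x| := by
        intro m
        have h1 : |Em m| ≤ ∫ x in ((m:ℕ):ℝ)..(((m:ℕ):ℝ)+1),
            |((x - (m:ℝ)) * ((m:ℝ) + 1 - x)) * FF2 s x| :=
          intervalIntegral.abs_integral_le_integral_abs (by linarith)
        have h2 : ∫ x in ((m:ℕ):ℝ)..(((m:ℕ):ℝ)+1),
            |((x - (m:ℝ)) * ((m:ℝ) + 1 - x)) * FF2 s x|
            ≤ ∫ x in ((m:ℕ):ℝ)..(((m:ℕ):ℝ)+1), (1/4) * |FF2 s x| := by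
          apply intervalIntegral.integral_mono_on (by linarith)
          · apply Continuous.intervalIntegrable
            exact (((continuous_id.sub continuous_const).mul
              ((continuous_const.sub continuous_id))).mul (cont_FF2 s)).abs
          · exact (((cont_FF2 s).abs).intervalIntegrable _ _).const_mul _
          · intro x hx
            rw [abs_mul]
            apply mul_le_mul _ le_rfl (abs_nonneg _) (by norm_num)
            rw [abs_le]
            constructor
            · have := mul_nonneg (by linarith [hx.1] : (0:ℝ) ≤ x - (m:ℝ))
                (by linarith [hx.2] : (0:ℝ) ≤ (m:ℝ) + 1 - x)
              linarith
            · nlinarith [sq_nonneg (x - (m:ℝ) - 1/2)]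
        rw [intervalIntegral.integral_const_mul] at h2
        linarith
      calc |∑ m ∈ Finset.range N, Em m| ≤ ∑ m ∈ Finset.range N, |Em m| :=
            Finset.abs_sum_le_sum_abs _ _
      _ ≤ ∑ m ∈ Finset.range N, (1/4) * ∫ x in ((m:ℕ):ℝ)..(((m:ℕ):ℝ)+1), |FF2 s x| :=
            Finset.sum_le_sum (fun m _ => each m)
      _ = (1/4) * ∫ x in (0:ℝ)..(N:ℝ), |FF2 s x| := by rw [← Finset.mul_sum, adjF2]
      _ ≤ (1/4) * (KK * s) := by
            have := int_FF2 hs hs2 (N:ℝ) hN0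
            linarith
      _ = KK * s / 4 := by ring
    -- integral of FF over [0,N]
    have intF_eq : ∫ x in (0:ℝ)..(N:ℝ), FF s x
        = (∫ x in (1/4:ℝ)..(3/4:ℝ), gg s x) - ∫ x in ((N:ℝ)+1/4)..((N:ℝ)+3/4), gg s x := by
      have hsub : ∫ x in (0:ℝ)..(N:ℝ), FF s x
          = (∫ x in (0:ℝ)..(N:ℝ), gg s (x + 1/4)) - ∫ x in (0:ℝ)..(N:ℝ), gg s (x + 3/4) := by
        rw [← intervalIntegral.integral_sub]
        · rfl
        · exact ((cont_gg s).comp (by fun_prop)).intervalIntegrable _ _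
        · exact ((cont_gg s).comp (by fun_prop)).intervalIntegrable _ _
      rw [hsub, intervalIntegral.integral_comp_add_right (f := gg s) (1/4:ℝ),
        intervalIntegral.integral_comp_add_right (f := gg s) (3/4:ℝ)]
      have c1 : ∫ x in ((0:ℝ)+1/4)..((N:ℝ)+1/4), gg s x
          = (∫ x in ((0:ℝ)+1/4)..((0:ℝ)+3/4), gg s x)
            + ∫ x in ((0:ℝ)+3/4)..((N:ℝ)+1/4), gg s x :=
        (intervalIntegral.integral_add_adjacent_intervals
          ((cont_gg s).intervalIntegrable _ _) ((cont_gg s).intervalIntegrable _ _)).symm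
      have c2 : ∫ x in ((0:ℝ)+3/4)..((N:ℝ)+3/4), gg s x
          = (∫ x in ((0:ℝ)+3/4)..((N:ℝ)+1/4), gg s x)
            + ∫ x in ((N:ℝ)+1/4)..((N:ℝ)+3/4), gg s x :=
        (intervalIntegral.integral_add_adjacent_intervals
          ((cont_gg s).intervalIntegrable _ _) ((cont_gg s).intervalIntegrable _ _)).symm
      rw [c1, c2]
      norm_num
      try ring
    -- tail bound
    have tail : |∫ x in ((N:ℝ)+1/4)..((N:ℝ)+3/4), gg s x| ≤ Real.exp (-(s * (N:ℝ))) / 2 := by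
      have hb : ∀ y ∈ Set.uIoc ((N:ℝ)+1/4) ((N:ℝ)+3/4), ‖gg s y‖ ≤ Real.exp (-(s * (N:ℝ))) := by
        intro y hy
        rw [Set.uIoc_of_le (by linarith)] at hy
        have hy1 : (N:ℝ) < y := by have := hy.1; linarith
        have hNsq : (N:ℝ) ≤ (N:ℝ)^2 := by
          have : N ≤ N^2 := Nat.le_self_pow two_ne_zero N
          exact_mod_cast this
        have hy2 : (N:ℝ)^2 ≤ y^2 := pow_le_pow_left₀ hN0 hy1.le 2
        rw [gg, Real.norm_eq_abs, abs_of_pos (Real.exp_pos _)]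
        apply Real.exp_le_exp.mpr
        nlinarith [mul_le_mul_of_nonneg_left hy2 hs.le, mul_le_mul_of_nonneg_left hNsq hs.le]
      have := intervalIntegral.norm_integral_le_of_norm_le_const hb
      rw [Real.norm_eq_abs] at this
      have habs2 : |((N:ℝ)+3/4) - ((N:ℝ)+1/4)| = 1/2 := by
        rw [show ((N:ℝ)+3/4) - ((N:ℝ)+1/4) = 1/2 by ring]
        norm_num
      rw [habs2] at this
      linarith
    -- middle integral
    have mid : |(∫ x in (1/4:ℝ)..(3/4:ℝ), gg s x) - 1/2| ≤ 9 * s / 32 := by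
      have heq : (∫ x in (1/4:ℝ)..(3/4:ℝ), gg s x) - 1/2
          = ∫ x in (1/4:ℝ)..(3/4:ℝ), (gg s x - 1) := by
        rw [intervalIntegral.integral_sub ((cont_gg s).intervalIntegrable _ _)
          (intervalIntegrable_const)]
        norm_num
      rw [heq]
      have hb : ∀ y ∈ Set.uIoc (1/4:ℝ) (3/4:ℝ), ‖gg s y - 1‖ ≤ 9 * s / 16 := by
        intro y hy
        rw [Set.uIoc_of_le (by norm_num)] at hy
        have h1 : gg s y ≤ 1 := Real.exp_le_one_iff.mpr (by nlinarith [sq_nonneg y])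
        have h2 : 1 - gg s y ≤ s * y^2 := one_sub_exp_le
        have h3 : y^2 ≤ 9/16 := by nlinarith [hy.1, hy.2]
        rw [Real.norm_eq_abs, abs_of_nonpos (by linarith)]
        nlinarith [mul_le_mul_of_nonneg_left h3 hs.le]
      have := intervalIntegral.norm_integral_le_of_norm_le_const hb
      rw [Real.norm_eq_abs] at this
      have habs2 : |(3/4:ℝ) - 1/4| = 1/2 := by norm_num
      rw [habs2] at this
      linarith
    -- |FF s 0| bound
    have F0 : |FF s (0:ℝ)| ≤ s / 2 := by
      have : FF s (0:ℝ) = Real.exp (-(s * (1/4)^2)) - Real.exp (-(s * (3/4)^2)) := by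
        simp [FF, gg]
      rw [this]
      have := exp_antitone_bound (a := s * (1/4)^2) (b := s * (3/4)^2)
        (by positivity) (by nlinarith)
      calc |Real.exp (-(s * (1/4)^2)) - Real.exp (-(s * (3/4)^2))|
          ≤ s * (3/4)^2 - s * (1/4)^2 := this
      _ = s / 2 := by ring
    -- combine
    have habs := abs_sub_abs_le_abs_sub (FF s (N:ℝ)) 0
    have key : (∑ m ∈ Finset.range N, FF s (m:ℝ)) - 1/2
        = ((∫ x in (1/4:ℝ)..(3/4:ℝ), gg s x) - 1/2)
          - (∫ x in ((N:ℝ)+1/4)..((N:ℝ)+3/4), gg s x)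
          - (FF s (N:ℝ) - FF s (0:ℝ))/2
          + (1/2) * ∑ m ∈ Finset.range N, Em m := by
      have := sum_eq
      rw [intF_eq] at this
      linarith
    rw [key]
    have h1 := abs_add_le (((∫ x in (1/4:ℝ)..(3/4:ℝ), gg s x) - 1/2)
          - (∫ x in ((N:ℝ)+1/4)..((N:ℝ)+3/4), gg s x)
          - (FF s (N:ℝ) - FF s (0:ℝ))/2) ((1/2) * ∑ m ∈ Finset.range N, Em m)
    have h2 := abs_sub (((∫ x in (1/4:ℝ)..(3/4:ℝ), gg s x) - 1/2)
          - (∫ x in ((N:ℝ)+1/4)..((N:ℝ)+3/4), gg s x))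
          ((FF s (N:ℝ) - FF s (0:ℝ))/2)
    have h3 := abs_sub ((∫ x in (1/4:ℝ)..(3/4:ℝ), gg s x) - 1/2)
          (∫ x in ((N:ℝ)+1/4)..((N:ℝ)+3/4), gg s x)
    have h4 : |(FF s (N:ℝ) - FF s (0:ℝ))/2| ≤ |FF s (N:ℝ)|/2 + |FF s (0:ℝ)|/2 := by
      rw [abs_div]
      have := abs_sub (FF s (N:ℝ)) (FF s (0:ℝ))
      rw [abs_of_pos (by norm_num : (0:ℝ) < 2)]
      linarith
    have h5 : |(1/2) * ∑ m ∈ Finset.range N, Em m| ≤ KK * s / 8 := by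
      rw [abs_mul, abs_of_pos (by norm_num : (0:ℝ) < 1/2)]
      linarith
    linarith
  -- limits
  have hT1 : Tendsto (fun N : ℕ => ∑ m ∈ Finset.range N, FF s (m:ℝ)) atTop
      (𝓝 (∑' k : ℕ, FF s (k:ℝ))) := hsumF.hasSum.tendsto_sum_nat
  have hT2 : Tendsto (fun N : ℕ => Real.exp (-(s * (N:ℝ)))) atTop (𝓝 0) := by
    have hA1 : Tendsto (fun N : ℕ => s * (N:ℝ)) atTop atTop :=
      Tendsto.const_mul_atTop hs tendsto_natCast_atTop_atTop
    have hA2 : Tendsto (fun N : ℕ => -(s * (N:ℝ))) atTop atBot := tendsto_neg_atBot_iff.mpr hA1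
    exact Real.tendsto_exp_atBot.comp hA2
  have hT3 : Tendsto (fun N : ℕ => |FF s (N:ℝ)|) atTop (𝓝 0) := by
    have := hsumF.tendsto_atTop_zero
    simpa using this.abs
  have hlhs : Tendsto (fun N : ℕ => |(∑ m ∈ Finset.range N, FF s (m:ℝ)) - 1/2|) atTop
      (𝓝 |(∑' k : ℕ, FF s (k:ℝ)) - 1/2|) := (hT1.sub_const (1/2)).abs
  have hrhs : Tendsto (fun N : ℕ => KK * s / 8 + 9 * s / 32 + s / 4
      + Real.exp (-(s * (N:ℝ))) / 2 + |FF s (N:ℝ)| / 2) atTop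
      (𝓝 (KK * s / 8 + 9 * s / 32 + s / 4 + 0 / 2 + 0 / 2)) := by
    exact ((tendsto_const_nhds.add (hT2.div_const 2)).add (hT3.div_const 2))
  have hfin := le_of_tendsto_of_tendsto' hlhs hrhs main
  have hKpos : (0:ℝ) < KK := by positivity
  have : KK * s / 8 + 9 * s / 32 + s / 4 + 0 / 2 + 0 / 2 ≤ (KK + 1) * s := by
    nlinarith [mul_nonneg hKpos.le hs.le]
  linarith

section Poisson2a
open Complex

lemma exp_inv_le {t : ℝ} (ht : 0 < t) : Real.exp (-(1/t)) ≤ 4 * t ^ 2 := by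
  have h1 : (1 + 1/(2*t)) ^ 2 ≤ Real.exp (1/t) := by
    have h2 : 1 + 1/(2*t) ≤ Real.exp (1/(2*t)) := by
      have := Real.add_one_le_exp (1/(2*t)); linarith
    have h3 : Real.exp (1/t) = Real.exp (1/(2*t)) ^ 2 := by
      rw [← Real.exp_nat_mul]; congr 1; push_cast; field_simp
    rw [h3]
    have h4 : 0 ≤ 1 + 1/(2*t) := by positivity
    nlinarith [h2, h4]
  have h5 : 1/(4*t^2) ≤ Real.exp (1/t) := by
    have hu : 0 < 1/(2*t) := by positivity
    have husq : (1/(2*t))^2 = 1/(4*t^2) := by field_simp; ring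
    nlinarith [h1, hu, husq]
  rw [Real.exp_neg]
  rw [inv_le_comm₀ (Real.exp_pos _) (by positivity)]
  calc (4 * t ^ 2)⁻¹ = 1/(4*t^2) := by ring
  _ ≤ Real.exp (1/t) := h5

set_option maxHeartbeats 2000000 in
lemma step2a {t : ℝ} (ht : 0 < t) (ht1 : t ≤ 1) :
    |((∑' k : ℕ, Real.exp (-(Real.pi^2*t * ((k:ℝ) + 3/4) ^ 2)))
      + ∑' k : ℕ, Real.exp (-(Real.pi^2*t * ((k:ℝ) + 1/4) ^ 2)))
      - 1 / Real.sqrt (Real.pi * t)|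
      ≤ (16 / Real.sqrt Real.pi) * t := by
  have hpi := Real.pi_pos
  set s : ℝ := Real.pi^2 * t with hsdef
  have hs : 0 < s := by positivity
  set a0 : ℝ := (Real.pi * t)⁻¹ with ha0def
  have ha0 : 0 < a0 := by positivity
  -- the Z-sum
  have hsum34 := summable_gauss hs (b := 3/4) (by norm_num)
  have hsum14 := summable_gauss hs (b := 1/4) (by norm_num)
  have hZsummable : Summable (fun n : ℤ => Real.exp (-(s * ((n:ℝ) + 3/4) ^ 2))) := by
    apply Summable.of_nat_of_neg_add_one
    · exact_mod_cast hsum34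
    · have : ∀ n : ℕ, Real.exp (-(s * (((-(n+1):ℤ):ℝ) + 3/4) ^ 2))
          = Real.exp (-(s * (((n:ℕ):ℝ) + 1/4) ^ 2)) := by
        intro n; congr 1; push_cast; ring
      exact Summable.congr hsum14 (fun n => (this n).symm)
  have hZsplit : (∑' n : ℤ, Real.exp (-(s * ((n:ℝ) + 3/4) ^ 2)))
      = (∑' k : ℕ, Real.exp (-(s * ((k:ℝ) + 3/4) ^ 2)))
        + ∑' k : ℕ, Real.exp (-(s * ((k:ℝ) + 1/4) ^ 2)) := by
    rw [tsum_of_nat_of_neg_add_one (by exact_mod_cast hsum34)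
      (by
        apply Summable.congr hsum14
        intro n; congr 1; push_cast; ring)]
    congr 1
    apply tsum_congr
    intro n; congr 1; push_cast; ring
  -- Poisson
  have hare : (0:ℝ) < ((a0 : ℂ)).re := by simpa using ha0
  have key := Complex.tsum_exp_neg_quadratic hare (-(3/4) * Complex.I)
  -- identify RHS sum with the real Z-sum
  have hRHS : (∑' n : ℤ, cexp (-(Real.pi:ℂ) / (a0:ℂ) * ((n:ℂ) + Complex.I * (-(3/4) * Complex.I)) ^ 2))
      = ((∑' n : ℤ, Real.exp (-(s * ((n:ℝ) + 3/4) ^ 2)) : ℝ) : ℂ) := by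
    rw [Complex.ofReal_tsum]
    apply tsum_congr
    intro n
    rw [Complex.ofReal_exp]
    congr 1
    have hI : Complex.I * (-(3/4) * Complex.I) = (3/4 : ℂ) := by
      rw [show Complex.I * (-(3/4) * Complex.I) = -(3/4) * (Complex.I * Complex.I) by ring,
        Complex.I_mul_I]
      ring
    rw [hI]
    have hπt : (Real.pi : ℂ) * (t : ℂ) ≠ 0 := by
      simp only [ne_eq, mul_eq_zero, Complex.ofReal_eq_zero]
      push_neg
      exact ⟨hpi.ne', ht.ne'⟩
    push_cast
    rw [ha0def]
    push_cast
    field_simp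
    norm_cast
    rw [hsdef]
    ring
  rw [hRHS] at key
  -- a0 ^ (1/2)
  have hcpow : (a0 : ℂ) ^ (1/2 : ℂ) = ((Real.sqrt a0 : ℝ) : ℂ) := by
    have h12 : ((1:ℂ)/2) = ((1/2 : ℝ) : ℂ) := by norm_num
    rw [h12, ← Complex.ofReal_cpow ha0.le]
    congr 1
    exact (Real.sqrt_eq_rpow a0).symm
  rw [hcpow] at key
  have hsqrt_pos : 0 < Real.sqrt a0 := Real.sqrt_pos.mpr ha0
  have hsqrt_ne : ((Real.sqrt a0 : ℝ) : ℂ) ≠ 0 := Complex.ofReal_ne_zero.mpr hsqrt_pos.ne'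
  set LS : ℂ := ∑' n : ℤ, cexp (-(Real.pi:ℂ) * (a0:ℂ) * (n:ℂ)^2
    + 2*(Real.pi:ℂ)*(-(3/4) * Complex.I)*(n:ℂ)) with hLSdef
  set SZ : ℝ := ∑' n : ℤ, Real.exp (-(s * ((n:ℝ) + 3/4) ^ 2)) with hSZdef
  have hSZ : (SZ : ℂ) = ((Real.sqrt a0 : ℝ) : ℂ) * LS := by
    rw [key]
    field_simp
  -- norms of terms of LS
  have hπa0 : Real.pi * a0 = 1/t := by
    rw [ha0def]
    field_simp
  have hnorm : ∀ n : ℤ, ‖cexp (-(Real.pi:ℂ) * (a0:ℂ) * (n:ℂ)^2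
      + 2*(Real.pi:ℂ)*(-(3/4) * Complex.I)*(n:ℂ))‖
      = Real.exp (-((1/t) * (n:ℝ)^2)) := by
    intro n
    have hre : (-(Real.pi:ℂ) * (a0:ℂ) * (n:ℂ)^2
        + 2*(Real.pi:ℂ)*(-(3/4) * Complex.I)*(n:ℂ))
        = ((-((1/t) * (n:ℝ)^2) : ℝ) : ℂ) + ((-(3/2) * Real.pi * (n:ℝ) : ℝ) : ℂ) * Complex.I := by
      rw [← hπa0]
      push_cast
      ring
    rw [hre, Complex.norm_exp]
    have hre2 : (((-(1 / t * (n:ℝ)^2) : ℝ) : ℂ)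
        + ((-(3/2) * Real.pi * (n:ℝ) : ℝ) : ℂ) * Complex.I).re = -(1/t * (n:ℝ)^2) := by
      simp only [Complex.add_re, Complex.mul_re, Complex.ofReal_re, Complex.ofReal_im,
        Complex.I_re, Complex.I_im, mul_zero, zero_mul, mul_one, sub_zero, add_zero]
    rw [hre2]
  have hsumgauss := summable_gauss (s := 1/t) (by positivity) (b := 1) (by norm_num)
  have hsum1 : Summable (fun n : ℕ => cexp (-(Real.pi:ℂ) * (a0:ℂ) * (((n:ℤ)+1:ℤ):ℂ)^2
      + 2*(Real.pi:ℂ)*(-(3/4) * Complex.I)*(((n:ℤ)+1:ℤ):ℂ))) := by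
    apply Summable.of_norm
    apply Summable.congr hsumgauss
    intro n
    rw [hnorm ((n:ℤ)+1)]
    push_cast
    ring_nf
  have hsum2 : Summable (fun n : ℕ => cexp (-(Real.pi:ℂ) * (a0:ℂ) * ((-((n:ℤ)+1):ℤ):ℂ)^2
      + 2*(Real.pi:ℂ)*(-(3/4) * Complex.I)*((-((n:ℤ)+1):ℤ):ℂ))) := by
    apply Summable.of_norm
    apply Summable.congr hsumgauss
    intro n
    rw [hnorm (-((n:ℤ)+1))]
    push_cast
    ring_nf
  -- split LS
  have hLSsplit : LS = (∑' n : ℕ, cexp (-(Real.pi:ℂ) * (a0:ℂ) * (((n:ℤ)+1:ℤ):ℂ)^2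
        + 2*(Real.pi:ℂ)*(-(3/4) * Complex.I)*(((n:ℤ)+1:ℤ):ℂ)))
      + 1
      + ∑' n : ℕ, cexp (-(Real.pi:ℂ) * (a0:ℂ) * ((-((n:ℤ)+1):ℤ):ℂ)^2
        + 2*(Real.pi:ℂ)*(-(3/4) * Complex.I)*((-((n:ℤ)+1):ℤ):ℂ)) := by
    rw [hLSdef]
    rw [tsum_of_add_one_of_neg_add_one (by exact_mod_cast hsum1) (by exact_mod_cast hsum2)]
    congr 2
    all_goals simp
  -- bound the gaussian tail sum
  have hT : (∑' n : ℕ, Real.exp (-((1/t) * ((n:ℝ) + 1) ^ 2))) ≤ 2 * Real.exp (-(1/t)) := by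
    have hgeo : Summable (fun n : ℕ => Real.exp (-(1/t)) * Real.exp (-1:ℝ) ^ n) := by
      apply Summable.mul_left
      exact summable_geometric_of_lt_one (Real.exp_pos _).le
        (Real.exp_lt_one_iff.mpr (by norm_num))
    have hle : ∀ n : ℕ, Real.exp (-((1/t) * ((n:ℝ) + 1) ^ 2))
        ≤ Real.exp (-(1/t)) * Real.exp (-1:ℝ) ^ n := by
      intro n
      have hexpn : Real.exp (-1:ℝ) ^ n = Real.exp (-(n:ℝ)) := by
        rw [← Real.exp_nat_mul]; norm_num
      rw [hexpn, ← Real.exp_add]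
      apply Real.exp_le_exp.mpr
      have hn0 : (0:ℝ) ≤ (n:ℝ) := Nat.cast_nonneg n
      have ht' : 1 ≤ 1/t := by rw [le_div_iff₀ ht]; linarith
      have h1 : ((n:ℝ) + 1) ^ 2 ≥ (n:ℝ) + 1 := by nlinarith
      have h2 : (1/t) * ((n:ℝ) + 1) ^ 2 ≥ (1/t) * ((n:ℝ) + 1) :=
        mul_le_mul_of_nonneg_left h1 (by positivity)
      have h3 : (1/t) * ((n:ℝ) + 1) ≥ (n:ℝ) + 1/t := by nlinarith
      linarith
    have := Summable.tsum_le_tsum hle (summable_gauss (s := 1/t) (by positivity) (b := 1) (by norm_num)) hgeo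
    rw [tsum_mul_left, tsum_geometric_of_lt_one (Real.exp_pos _).le
      (Real.exp_lt_one_iff.mpr (by norm_num))] at this
    have he2 : (2:ℝ) ≤ Real.exp 1 := by have := Real.add_one_le_exp (1:ℝ); linarith
    have hexpinv : Real.exp (-1:ℝ) ≤ 1/2 := by
      rw [Real.exp_neg]
      rw [inv_le_comm₀ (Real.exp_pos _) (by norm_num)]
      linarith
    have hden : (1:ℝ)/2 ≤ 1 - Real.exp (-1:ℝ) := by linarith
    have hfac : (1 - Real.exp (-1:ℝ))⁻¹ ≤ 2 := by
      rw [inv_le_comm₀ (by linarith) (by norm_num)]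
      linarith
    calc (∑' n : ℕ, Real.exp (-((1/t) * ((n:ℝ) + 1) ^ 2)))
        ≤ Real.exp (-(1/t)) * (1 - Real.exp (-1:ℝ))⁻¹ := this
    _ ≤ Real.exp (-(1/t)) * 2 := mul_le_mul_of_nonneg_left hfac (Real.exp_pos _).le
    _ = 2 * Real.exp (-(1/t)) := by ring
  -- bound ‖LS - 1‖
  have hnormLS : ‖LS - 1‖ ≤ 4 * Real.exp (-(1/t)) := by
    rw [hLSsplit]
    have hb1 : ‖∑' n : ℕ, cexp (-(Real.pi:ℂ) * (a0:ℂ) * (((n:ℤ)+1:ℤ):ℂ)^2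
        + 2*(Real.pi:ℂ)*(-(3/4) * Complex.I)*(((n:ℤ)+1:ℤ):ℂ))‖
        ≤ 2 * Real.exp (-(1/t)) := by
      refine le_trans (norm_tsum_le_tsum_norm ?_) ?_
      · apply Summable.congr hsumgauss
        intro n
        rw [hnorm ((n:ℤ)+1)]
        push_cast
        ring_nf
      · refine le_trans (le_of_eq (tsum_congr fun n => ?_)) hT
        rw [hnorm ((n:ℤ)+1)]
        push_cast
        ring_nf
    have hb2 : ‖∑' n : ℕ, cexp (-(Real.pi:ℂ) * (a0:ℂ) * ((-((n:ℤ)+1):ℤ):ℂ)^2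
        + 2*(Real.pi:ℂ)*(-(3/4) * Complex.I)*((-((n:ℤ)+1):ℤ):ℂ))‖
        ≤ 2 * Real.exp (-(1/t)) := by
      refine le_trans (norm_tsum_le_tsum_norm ?_) ?_
      · apply Summable.congr hsumgauss
        intro n
        rw [hnorm (-((n:ℤ)+1))]
        push_cast
        ring_nf
      · refine le_trans (le_of_eq (tsum_congr fun n => ?_)) hT
        rw [hnorm (-((n:ℤ)+1))]
        push_cast
        ring_nf
    calc ‖(∑' n : ℕ, cexp (-(Real.pi:ℂ) * (a0:ℂ) * (((n:ℤ)+1:ℤ):ℂ)^2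
        + 2*(Real.pi:ℂ)*(-(3/4) * Complex.I)*(((n:ℤ)+1:ℤ):ℂ)))
      + 1
      + (∑' n : ℕ, cexp (-(Real.pi:ℂ) * (a0:ℂ) * ((-((n:ℤ)+1):ℤ):ℂ)^2
        + 2*(Real.pi:ℂ)*(-(3/4) * Complex.I)*((-((n:ℤ)+1):ℤ):ℂ))) - 1‖
        = ‖(∑' n : ℕ, cexp (-(Real.pi:ℂ) * (a0:ℂ) * (((n:ℤ)+1:ℤ):ℂ)^2
        + 2*(Real.pi:ℂ)*(-(3/4) * Complex.I)*(((n:ℤ)+1:ℤ):ℂ)))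
      + (∑' n : ℕ, cexp (-(Real.pi:ℂ) * (a0:ℂ) * ((-((n:ℤ)+1):ℤ):ℂ)^2
        + 2*(Real.pi:ℂ)*(-(3/4) * Complex.I)*((-((n:ℤ)+1):ℤ):ℂ)))‖ := by
          congr 1; ring
    _ ≤ _ := norm_add_le _ _
    _ ≤ 2 * Real.exp (-(1/t)) + 2 * Real.exp (-(1/t)) := add_le_add hb1 hb2
    _ = 4 * Real.exp (-(1/t)) := by ring
  -- assemble
  have hdiff : |SZ - Real.sqrt a0| ≤ Real.sqrt a0 * (4 * Real.exp (-(1/t))) := by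
    have hcast : ((SZ - Real.sqrt a0 : ℝ) : ℂ) = ((Real.sqrt a0 : ℝ) : ℂ) * (LS - 1) := by
      push_cast
      rw [hSZ]
      ring
    have := congrArg norm hcast
    rw [Complex.norm_real] at this
    rw [Real.norm_eq_abs] at this
    rw [this, norm_mul, Complex.norm_real, Real.norm_eq_abs,
      abs_of_pos hsqrt_pos]
    exact mul_le_mul_of_nonneg_left hnormLS hsqrt_pos.le
  have hsqrt_eq : Real.sqrt a0 = 1 / Real.sqrt (Real.pi * t) := by
    rw [ha0def, Real.sqrt_inv, one_div]
  have hexpt := exp_inv_le ht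
  have hsπ : 0 < Real.sqrt Real.pi := Real.sqrt_pos.mpr hpi
  have hst : 0 < Real.sqrt t := Real.sqrt_pos.mpr ht
  have hstt : Real.sqrt t * Real.sqrt t = t := Real.mul_self_sqrt ht.le
  have hsplitsqrt : Real.sqrt (Real.pi * t) = Real.sqrt Real.pi * Real.sqrt t :=
    Real.sqrt_mul hpi.le t
  have hut : t ≤ Real.sqrt t := by nlinarith
  have hfinal : (1 / (Real.sqrt Real.pi * Real.sqrt t)) * (4 * (4 * t ^ 2))
      ≤ (16 / Real.sqrt Real.pi) * t := by
    have e1 : (1 / (Real.sqrt Real.pi * Real.sqrt t)) * (4 * (4 * t ^ 2))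
        = (16 * t ^ 2) / (Real.sqrt Real.pi * Real.sqrt t) := by ring
    have e2 : (16 / Real.sqrt Real.pi) * t = (16 * t) / Real.sqrt Real.pi := by ring
    rw [e1, e2, div_le_div_iff₀ (by positivity) (by positivity)]
    have hh := mul_le_mul_of_nonneg_left hut
      (by positivity : (0:ℝ) ≤ 16 * t * Real.sqrt Real.pi)
    nlinarith [hh]
  have h2a0 : Real.sqrt a0 = 1/(Real.sqrt Real.pi * Real.sqrt t) := by
    rw [hsqrt_eq, hsplitsqrt]
  rw [← hZsplit]
  calc |SZ - 1 / Real.sqrt (Real.pi * t)| = |SZ - Real.sqrt a0| := by rw [hsqrt_eq]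
  _ ≤ Real.sqrt a0 * (4 * Real.exp (-(1/t))) := hdiff
  _ = (1/(Real.sqrt Real.pi * Real.sqrt t)) * (4 * Real.exp (-(1/t))) := by rw [h2a0]
  _ ≤ (1/(Real.sqrt Real.pi * Real.sqrt t)) * (4 * (4 * t ^ 2)) :=
      mul_le_mul_of_nonneg_left (by linarith [hexpt]) (by positivity)
  _ ≤ (16 / Real.sqrt Real.pi) * t := hfinal
end Poisson2a

lemma exp_near {x y c : ℝ} (hy : 0 ≤ y) (hc : |x - y| ≤ c) :
    |Real.exp (-x) - Real.exp (-y)| ≤ |x - y| * Real.exp c := by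
  have hc0 : 0 ≤ c := le_trans (abs_nonneg _) hc
  have h1 : Real.exp (-x) - Real.exp (-y) = Real.exp (-y) * (Real.exp (y - x) - 1) := by
    rw [mul_sub, ← Real.exp_add]
    ring_nf
  have h2 : Real.exp (-y) ≤ 1 := Real.exp_le_one_iff.mpr (by linarith)
  have h3 : |Real.exp (y - x) - 1| ≤ |y - x| * Real.exp c := by
    rcases le_or_gt x y with h | h
    · -- y - x ≥ 0
      have hu : 0 ≤ y - x := by linarith
      have hb1 : Real.exp (y - x) - 1 ≤ (y - x) * Real.exp (y - x) := by
        nlinarith [Real.add_one_le_exp (-(y - x)), Real.exp_pos (y - x),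
          mul_pos (Real.exp_pos (y-x)) (Real.exp_pos (-(y-x))), Real.exp_neg (y-x),
          mul_inv_cancel₀ (Real.exp_pos (y-x)).ne']
      have hb2 : Real.exp (y - x) ≤ Real.exp c := by
        apply Real.exp_le_exp.mpr
        have : |y - x| ≤ c := by rw [abs_sub_comm] at hc; exact hc
        exact le_trans (le_abs_self _) this
      have hb3 : 0 ≤ Real.exp (y - x) - 1 := by
        nlinarith [Real.add_one_le_exp (y - x)]
      rw [abs_of_nonneg hb3, abs_of_nonneg hu]
      nlinarith [Real.exp_pos (y - x)]
    · -- y - x < 0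
      have hu : y - x < 0 := by linarith
      have hb1 : Real.exp (y - x) ≤ 1 := Real.exp_le_one_iff.mpr hu.le
      have hb2 : 1 - Real.exp (y - x) ≤ x - y := by
        have := one_sub_exp_le (u := x - y)
        rw [show -(x - y) = y - x by ring] at this
        linarith
      rw [abs_of_nonpos (by linarith), abs_of_neg hu]
      have hec : 1 ≤ Real.exp c := Real.one_le_exp hc0
      nlinarith
  calc |Real.exp (-x) - Real.exp (-y)|
      = Real.exp (-y) * |Real.exp (y - x) - 1| := by
        rw [h1, abs_mul, abs_of_pos (Real.exp_pos _)]
  _ ≤ 1 * (|y - x| * Real.exp c) := by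
        apply mul_le_mul h2 h3 (abs_nonneg _) (by norm_num)
  _ = |x - y| * Real.exp c := by rw [abs_sub_comm]; ring

lemma summable_inv_sq : Summable (fun k : ℕ => 1 / ((k : ℝ) + 1) ^ 2) := by
  have h := Real.summable_one_div_nat_pow.mpr (le_refl 2)
  have h2 := (summable_nat_add_iff 1).mpr h
  apply Summable.congr h2
  intro n
  push_cast
  ring

lemma step1 (a : ℕ → ℝ) (C : ℝ) (hC : 0 < C)
    (ha : ∀ k : ℕ, 1 ≤ k →
      |a k - (((k : ℝ) - 1 / 4) ^ 2 * Real.pi ^ 2 + 1 / 4)| ≤ C / (k : ℝ) ^ 2)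
    {t : ℝ} (ht : 0 < t) (ht1 : t ≤ 1) :
    |(∑' k : ℕ, Real.exp (-t * a (k + 1)))
      - Real.exp (-(t/4)) * ∑' k : ℕ, Real.exp (-(Real.pi^2 * t * ((k:ℝ) + 3/4) ^ 2))|
      ≤ (C * Real.exp C * (∑' k : ℕ, 1 / ((k : ℝ) + 1) ^ 2)) * t := by
  have hpi := Real.pi_pos
  have hs : 0 < Real.pi ^ 2 * t := by positivity
  set b : ℕ → ℝ := fun k => Real.pi ^ 2 * t * ((k:ℝ) + 3/4) ^ 2 + t/4 with hbdef
  have hgauss := summable_gauss hs (b := 3/4) (by norm_num)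
  -- termwise difference bound
  have hterm : ∀ k : ℕ, |Real.exp (-t * a (k + 1)) - Real.exp (-(b k))|
      ≤ (C * Real.exp C) * t * (1 / ((k:ℝ) + 1) ^ 2) := by
    intro k
    have hk1 : (1:ℝ) ≤ ((k:ℕ):ℝ) + 1 := by
      have : (0:ℝ) ≤ (k:ℝ) := Nat.cast_nonneg k
      linarith
    have hak := ha (k + 1) (by omega)
    have hcast : (((k+1:ℕ)):ℝ) = (k:ℝ) + 1 := by push_cast; ring
    rw [hcast] at hak
    have href : (((k:ℝ) + 1) - 1/4) ^ 2 * Real.pi ^ 2 + 1/4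
        = Real.pi ^ 2 * ((k:ℝ) + 3/4) ^ 2 + 1/4 := by ring
    rw [href] at hak
    -- |t * a (k+1) - b k| ≤ t * C / (k+1)^2
    have hdiff : |t * a (k + 1) - b k| ≤ C * t * (1 / ((k:ℝ) + 1) ^ 2) := by
      have : t * a (k + 1) - b k
          = t * (a (k + 1) - (Real.pi ^ 2 * ((k:ℝ) + 3/4) ^ 2 + 1/4)) := by
        rw [hbdef]; ring
      rw [this, abs_mul, abs_of_pos ht]
      have := mul_le_mul_of_nonneg_left hak ht.le
      calc t * |a (k + 1) - (Real.pi ^ 2 * ((k:ℝ) + 3/4) ^ 2 + 1/4)|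
          ≤ t * (C / ((k:ℝ) + 1) ^ 2) := this
      _ = C * t * (1 / ((k:ℝ) + 1) ^ 2) := by ring
    have hdc : |t * a (k + 1) - b k| ≤ C := by
      apply le_trans hdiff
      have h1 : 1 / ((k:ℝ) + 1) ^ 2 ≤ 1 := by
        rw [div_le_one (by positivity)]
        nlinarith
      have h0 : (0:ℝ) ≤ 1 / ((k:ℝ) + 1) ^ 2 := by positivity
      have hCt : C * t ≤ C := by nlinarith
      have := mul_le_mul hCt h1 h0 hC.le
      linarith
    have hb0 : 0 ≤ b k := by rw [hbdef]; positivity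
    have hmain := exp_near (x := t * a (k + 1)) (y := b k) hb0 hdc
    have hfin : |t * a (k + 1) - b k| * Real.exp C
        ≤ (C * t * (1 / ((k:ℝ) + 1) ^ 2)) * Real.exp C :=
      mul_le_mul_of_nonneg_right hdiff (Real.exp_pos _).le
    have heq : ∀ z : ℝ, Real.exp (-t * a (k+1)) = Real.exp (-(t * a (k+1))) := by
      intro z; ring_nf
    calc |Real.exp (-t * a (k + 1)) - Real.exp (-(b k))|
        = |Real.exp (-(t * a (k + 1))) - Real.exp (-(b k))| := by rw [neg_mul]
    _ ≤ |t * a (k + 1) - b k| * Real.exp C := hmain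
    _ ≤ (C * t * (1 / ((k:ℝ) + 1) ^ 2)) * Real.exp C := hfin
    _ = (C * Real.exp C) * t * (1 / ((k:ℝ) + 1) ^ 2) := by ring
  -- summability of both series
  have hsumb : Summable (fun k : ℕ => Real.exp (-(b k))) := by
    apply Summable.congr (hgauss.mul_left (Real.exp (-(t/4))))
    intro k
    rw [← Real.exp_add, hbdef]
    congr 1
    ring
  have hsuma : Summable (fun k : ℕ => Real.exp (-t * a (k + 1))) := by
    refine Summable.of_nonneg_of_le (fun k => (Real.exp_pos _).le) (fun k => ?_)
      (hsumb.mul_left (Real.exp C))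
    rw [← Real.exp_add]
    apply Real.exp_le_exp.mpr
    have := hterm k
    have h2 : |t * a (k+1) - b k| ≤ C := by
      have hk1 : (1:ℝ) ≤ ((k:ℕ):ℝ) + 1 := by
        have : (0:ℝ) ≤ (k:ℝ) := Nat.cast_nonneg k
        linarith
      have hak := ha (k + 1) (by omega)
      have hcast : (((k+1:ℕ)):ℝ) = (k:ℝ) + 1 := by push_cast; ring
      rw [hcast] at hak
      have href : (((k:ℝ) + 1) - 1/4) ^ 2 * Real.pi ^ 2 + 1/4
          = Real.pi ^ 2 * ((k:ℝ) + 3/4) ^ 2 + 1/4 := by ring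
      rw [href] at hak
      have heq2 : t * a (k + 1) - b k
          = t * (a (k + 1) - (Real.pi ^ 2 * ((k:ℝ) + 3/4) ^ 2 + 1/4)) := by
        rw [hbdef]; ring
      rw [heq2, abs_mul, abs_of_pos ht]
      have hb1 := mul_le_mul_of_nonneg_left hak ht.le
      have h1 : C / ((k:ℝ) + 1) ^ 2 ≤ C := by
        rw [div_le_iff₀ (by positivity)]
        have hsq : (1:ℝ) ≤ ((k:ℝ)+1)^2 := by nlinarith
        nlinarith
      have hinv0 : (0:ℝ) ≤ 1 / ((k:ℝ) + 1) ^ 2 := by positivity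
      have hCt : C * t ≤ C := by nlinarith
      have hCdiv : C * t * (1 / ((k:ℝ)+1)^2) = C / ((k:ℝ)+1)^2 * t := by ring
      nlinarith [mul_le_mul_of_nonneg_right h1 ht.le]
    have h3 : t * a (k+1) ≥ b k - C := by
      have := abs_le.mp h2
      linarith [this.1]
    linarith
  -- combine
  have hsub : (∑' k : ℕ, Real.exp (-t * a (k + 1)))
      - Real.exp (-(t/4)) * ∑' k : ℕ, Real.exp (-(Real.pi^2 * t * ((k:ℝ) + 3/4) ^ 2))
      = ∑' k : ℕ, (Real.exp (-t * a (k + 1)) - Real.exp (-(b k))) := by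
    rw [Summable.tsum_sub hsuma hsumb]
    congr 1
    rw [← tsum_mul_left]
    apply tsum_congr
    intro k
    rw [← Real.exp_add, hbdef]
    congr 1
    ring
  rw [hsub]
  have hsumdiff : Summable (fun k : ℕ => |Real.exp (-t * a (k + 1)) - Real.exp (-(b k))|) := by
    refine Summable.of_nonneg_of_le (fun k => abs_nonneg _) (fun k => hterm k) ?_
    exact (summable_inv_sq.mul_left _)
  calc |∑' k : ℕ, (Real.exp (-t * a (k + 1)) - Real.exp (-(b k)))|
      ≤ ∑' k : ℕ, |Real.exp (-t * a (k + 1)) - Real.exp (-(b k))| := by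
        simpa using norm_tsum_le_tsum_norm (f := fun k : ℕ =>
          Real.exp (-t * a (k + 1)) - Real.exp (-(b k))) (by simpa using hsumdiff)
  _ ≤ ∑' k : ℕ, (C * Real.exp C) * t * (1 / ((k:ℝ) + 1) ^ 2) :=
        Summable.tsum_le_tsum hterm hsumdiff (by exact (summable_inv_sq.mul_left _))
  _ = (C * Real.exp C * (∑' k : ℕ, 1 / ((k : ℝ) + 1) ^ 2)) * t := by
        rw [tsum_mul_left]
        ring
lemma exp_second_order {t : ℝ} (ht : 0 < t) (ht1 : t ≤ 1) :
    1 - t/4 ≤ Real.exp (-(t/4)) ∧ Real.exp (-(t/4)) ≤ 1 - t/4 + t^2/16 := by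
  constructor
  · have := Real.add_one_le_exp (-(t/4)); linarith
  · have hB : (1 + t/8)^2 ≤ Real.exp (t/4) := by
      have h2 : 1 + t/8 ≤ Real.exp (t/8) := by
        have := Real.add_one_le_exp (t/8); linarith
      have h3 : Real.exp (t/4) = Real.exp (t/8) ^ 2 := by
        rw [← Real.exp_nat_mul]; congr 1; push_cast; ring
      rw [h3]
      nlinarith [h2, ht.le]
    have hBpos : (0:ℝ) < (1 + t/8)^2 := by positivity
    have h1 : Real.exp (-(t/4)) ≤ ((1 + t/8)^2)⁻¹ := by
      rw [Real.exp_neg]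
      exact inv_anti₀ hBpos hB
    have h2 : 1 ≤ (1 - t/4 + t^2/16) * (1 + t/8)^2 := by nlinarith [ht.le, ht1]
    have h3 := mul_le_mul_of_nonneg_left h2 (inv_pos.mpr hBpos).le
    have h4 : ((1 + t/8)^2)⁻¹ * ((1 - t/4 + t^2/16) * (1 + t/8)^2)
        = 1 - t/4 + t^2/16 := by field_simp
    rw [h4] at h3
    rw [mul_one] at h3
    linarith

lemma step3 {t : ℝ} (ht : 0 < t) (ht1 : t ≤ 1) :
    |Real.exp (-(t/4)) * (1/(2*(Real.sqrt Real.pi * Real.sqrt t)) - 1/4)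
      - ((1/(2*Real.sqrt Real.pi)) * (Real.sqrt t)⁻¹ - 1/4
        - (1/(8*Real.sqrt Real.pi)) * Real.sqrt t)|
    ≤ (1/(32*Real.sqrt Real.pi) + 1/16) * t := by
  have hpi := Real.pi_pos
  have hv : 0 < Real.sqrt Real.pi := Real.sqrt_pos.mpr hpi
  have hu : 0 < Real.sqrt t := Real.sqrt_pos.mpr ht
  have huu : Real.sqrt t * Real.sqrt t = t := Real.mul_self_sqrt ht.le
  have hu1 : Real.sqrt t ≤ 1 := by
    rw [show (1:ℝ) = Real.sqrt 1 by simp]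
    exact Real.sqrt_le_sqrt ht1
  obtain ⟨hE1, hE2⟩ := exp_second_order ht ht1
  set e := Real.exp (-(t/4)) with hedef
  set u := Real.sqrt t with hudef
  set v := Real.sqrt Real.pi with hvdef
  have hexpr : e * (1/(2*(v*u)) - 1/4)
      - ((1/(2*v)) * u⁻¹ - 1/4 - (1/(8*v)) * u)
      = (e - 1 + u*u/4)/(2*v*u) + (1 - e)/4 := by
    field_simp
    ring
  rw [hexpr, ← huu]
  have hEb : |e - 1 + u*u/4| ≤ (u*u)^2/16 := by
    rw [huu, abs_of_nonneg (by linarith)]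
    linarith
  have he1 : e ≤ 1 := Real.exp_le_one_iff.mpr (by linarith)
  have h1e : |(1 - e)/4| ≤ (u*u)/16 := by
    rw [huu, abs_of_nonneg (by linarith)]
    linarith
  have habs := abs_add_le ((e - 1 + u*u/4)/(2*v*u)) ((1 - e)/4)
  have hterm1 : |(e - 1 + u*u/4)/(2*v*u)| ≤ (u*u)/(32*v) := by
    rw [abs_div, abs_of_pos (by positivity : (0:ℝ) < 2*v*u)]
    rw [div_le_div_iff₀ (by positivity) (by positivity)]
    calc |e - 1 + u*u/4| * (32*v) ≤ ((u*u)^2/16) * (32*v) := by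
          apply mul_le_mul_of_nonneg_right hEb (by positivity)
    _ = (u*u) * (u * (2*v*u)) := by ring
    _ ≤ (u*u) * (1 * (2*v*u)) := by
          apply mul_le_mul_of_nonneg_left _ (by positivity)
          apply mul_le_mul_of_nonneg_right hu1 (by positivity)
    _ = (u*u) * (2*v*u) := by ring
  calc |(e - 1 + u*u/4)/(2*v*u) + (1 - e)/4|
      ≤ |(e - 1 + u*u/4)/(2*v*u)| + |(1 - e)/4| := habs
  _ ≤ (u*u)/(32*v) + (u*u)/16 := add_le_add hterm1 h1e
  _ = (1/(32*v) + 1/16) * (u*u) := by ring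

end ST13
end ST13

set_option maxHeartbeats 2000000 in
theorem stmt13 (a : ℕ → ℝ) (C : ℝ) (hC : 0 < C)
    (ha : ∀ k : ℕ, 1 ≤ k →
      |a k - (((k : ℝ) - 1 / 4) ^ 2 * Real.pi ^ 2 + 1 / 4)| ≤ C / (k : ℝ) ^ 2) :
    ∃ (c C' : ℝ), 0 < C' ∧ ∀ t ∈ Set.Ioc (0 : ℝ) 1,
      |(∑' k : ℕ, Real.exp (-t * a (k + 1))) -
        ((1 / (2 * Real.sqrt Real.pi)) * t ^ (-(1 : ℝ) / 2) + c -
          (1 / (8 * Real.sqrt Real.pi)) * t ^ ((1 : ℝ) / 2))| ≤ C' * t := by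
  have hpi := Real.pi_pos
  have hvpos : 0 < Real.sqrt Real.pi := Real.sqrt_pos.mpr hpi
  set T : ℝ := ∑' k : ℕ, 1 / ((k : ℝ) + 1) ^ 2 with hTdef
  have hT0 : 0 ≤ T := tsum_nonneg (fun k => by positivity)
  set K1 : ℝ := C * Real.exp C * T with hK1def
  set K2 : ℝ := (16 / Real.sqrt Real.pi + (KK + 1) * Real.pi ^ 2) / 2 with hK2def
  set K3 : ℝ := 1/(32*Real.sqrt Real.pi) + 1/16 with hK3def
  have hK10 : 0 ≤ K1 := mul_nonneg (by positivity) hT0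
  have hK20 : 0 ≤ K2 := by positivity
  have hK30 : 0 ≤ K3 := by positivity
  refine ⟨-(1/4), K1 + K2 + K3 + 1, by linarith, ?_⟩
  rintro t ⟨ht, ht1⟩
  have hs : 0 < Real.pi ^ 2 * t := by positivity
  have hs2 : Real.pi ^ 2 * t ≤ Real.pi ^ 2 := by nlinarith
  have hu : 0 < Real.sqrt t := Real.sqrt_pos.mpr ht
  -- sums
  set G34 : ℝ := ∑' k : ℕ, Real.exp (-(Real.pi^2 * t * ((k:ℝ) + 3/4) ^ 2)) with hG34
  set G14 : ℝ := ∑' k : ℕ, Real.exp (-(Real.pi^2 * t * ((k:ℝ) + 1/4) ^ 2)) with hG14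
  set H : ℝ := ∑' k : ℕ, Real.exp (-t * a (k + 1)) with hH
  have h34sum := ST13.summable_gauss hs (b := 3/4) (by norm_num)
  have h14sum := ST13.summable_gauss hs (b := 1/4) (by norm_num)
  have h1 : |H - Real.exp (-(t/4)) * G34| ≤ K1 * t := ST13.step1 a C hC ha ht ht1
  have h2 : |(G34 + G14) - 1 / Real.sqrt (Real.pi * t)| ≤ (16 / Real.sqrt Real.pi) * t :=
    ST13.step2a ht ht1
  have hFFeq : (∑' k : ℕ, ST13.FF (Real.pi ^ 2 * t) (k : ℝ)) = G14 - G34 := by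
    rw [hG14, hG34, ← Summable.tsum_sub h14sum h34sum]
    apply tsum_congr
    intro k
    simp [ST13.FF, ST13.gg]
  have h3 : |(G14 - G34) - 1/2| ≤ ((KK + 1) * Real.pi ^ 2) * t := by
    have := ST13.step2b hs hs2
    rw [hFFeq] at this
    calc |(G14 - G34) - 1/2| ≤ (KK + 1) * (Real.pi ^ 2 * t) := this
    _ = ((KK + 1) * Real.pi ^ 2) * t := by ring
  have h4 : |G34 - (1/(2*Real.sqrt (Real.pi * t)) - 1/4)| ≤ K2 * t := by
    have key : G34 - (1/(2*Real.sqrt (Real.pi * t)) - 1/4)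
        = (((G34 + G14) - 1/Real.sqrt (Real.pi * t)) - ((G14 - G34) - 1/2))/2 := by
      ring
    rw [key, abs_div, abs_two]
    have htri := abs_sub ((G34 + G14) - 1/Real.sqrt (Real.pi * t)) ((G14 - G34) - 1/2)
    rw [hK2def]
    have hKK0 : (0:ℝ) ≤ KK := by positivity
    linarith
  have hexp1 : Real.exp (-(t/4)) ≤ 1 := Real.exp_le_one_iff.mpr (by linarith)
  have h5 : |Real.exp (-(t/4)) * G34
      - Real.exp (-(t/4)) * (1/(2*Real.sqrt (Real.pi * t)) - 1/4)| ≤ K2 * t := by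
    rw [← mul_sub, abs_mul, abs_of_pos (Real.exp_pos _)]
    calc Real.exp (-(t/4)) * |G34 - (1/(2*Real.sqrt (Real.pi * t)) - 1/4)|
        ≤ 1 * (K2 * t) := mul_le_mul hexp1 h4 (abs_nonneg _) (by norm_num)
    _ = K2 * t := by ring
  have hsplit : Real.sqrt (Real.pi * t) = Real.sqrt Real.pi * Real.sqrt t :=
    Real.sqrt_mul hpi.le t
  have h6 : |Real.exp (-(t/4)) * (1/(2*Real.sqrt (Real.pi * t)) - 1/4)
      - ((1/(2*Real.sqrt Real.pi)) * (Real.sqrt t)⁻¹ - 1/4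
        - (1/(8*Real.sqrt Real.pi)) * Real.sqrt t)| ≤ K3 * t := by
    rw [hsplit]
    exact ST13.step3 ht ht1
  -- rewrite goal in sqrt form
  have hr1 : t ^ (-(1:ℝ)/2) = (Real.sqrt t)⁻¹ := by
    rw [show (-(1:ℝ)/2) = -(1/2 : ℝ) by norm_num, Real.rpow_neg ht.le, ← Real.sqrt_eq_rpow]
  have hr2 : t ^ ((1:ℝ)/2) = Real.sqrt t := by
    rw [show ((1:ℝ)/2) = (1/2 : ℝ) by norm_num, ← Real.sqrt_eq_rpow]
  rw [hr1, hr2]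
  have hYeq : (1/(2*Real.sqrt Real.pi)) * (Real.sqrt t)⁻¹ + -(1/4)
      - (1/(8*Real.sqrt Real.pi)) * Real.sqrt t
      = (1/(2*Real.sqrt Real.pi)) * (Real.sqrt t)⁻¹ - 1/4
        - (1/(8*Real.sqrt Real.pi)) * Real.sqrt t := by ring
  rw [hYeq]
  have htri1 := abs_sub_le H (Real.exp (-(t/4)) * G34)
    ((1/(2*Real.sqrt Real.pi)) * (Real.sqrt t)⁻¹ - 1/4 - (1/(8*Real.sqrt Real.pi)) * Real.sqrt t)
  have htri2 := abs_sub_le (Real.exp (-(t/4)) * G34)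
    (Real.exp (-(t/4)) * (1/(2*Real.sqrt (Real.pi * t)) - 1/4))
    ((1/(2*Real.sqrt Real.pi)) * (Real.sqrt t)⁻¹ - 1/4 - (1/(8*Real.sqrt Real.pi)) * Real.sqrt t)
  linarith
end
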